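/- arXiv:1501.06311 — 8 statements merged into one kernel-verified Lean document; each statement's English description precedes it below -/
import Mathlib

section
/- If f is a C¹ complex-valued function on ℝ^d and A : ℝ^d → ℝ^d is a C¹ vector field, then the magnetic gradient ∇_A f := (∂f/∂x_k − i A_k f)_{k=1..d} satisfies |∇_A f(x)| ≥ |∇|f|(x)| at almost every x (the diamagnetic inequality). -/
/-!
Away from the zeros of `f`, `d|f| = Re (conj f · df) / |f|`. Since `conj f · (i a f) = i a |f|²`
is purely imaginary for real `a`, subtracting `i ⟨A, ·⟩ f` from `df` does not change this, so
`|d|f|| ≤ |df − i ⟨A, ·⟩ f|`; at a zero of `f`, `|f|` has a minimum and `d|f| = 0`. The operator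
norm of a linear map on `ℝ^d` is bounded by the Euclidean norm of its values on the standard basis
(Cauchy–Schwarz), and for `df − i ⟨A, ·⟩ f` that vector is `∇_A f`. The inequality therefore holds
at every point.
-/

open MeasureTheory

section NormDeriv

variable {E F : Type*} [NormedAddCommGroup E] [NormedSpace ℝ E]
  [NormedAddCommGroup F] [InnerProductSpace ℝ F] {f : E → F} {f' : E →L[ℝ] F} {x : E}

theorem HasFDerivAt.norm (hf : HasFDerivAt f f' x) (h0 : f x ≠ 0) :
    HasFDerivAt (fun y => ‖f y‖) (‖f x‖⁻¹ • (innerSL ℝ (f x)).comp f') x := by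
  have h := hf.norm_sq.sqrt (by simpa using h0)
  simp only [Real.sqrt_sq (norm_nonneg _)] at h
  convert h using 1
  ext v
  simp only [smul_apply, ContinuousLinearMap.comp_apply, coe_innerSL_apply,
    smul_eq_mul, one_div, mul_inv_rev, nsmul_eq_mul, Nat.cast_ofNat]
  field_simp

theorem norm_fderiv_norm_le_norm_fderiv_sub (hf : DifferentiableAt ℝ f x) {B : E →L[ℝ] F}
    (hB : ∀ v, inner ℝ (f x) (B v) = 0) :
    ‖fderiv ℝ (fun y => ‖f y‖) x‖ ≤ ‖fderiv ℝ f x - B‖ := by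
  by_cases h0 : f x = 0
  · have hmin : IsLocalMin (fun y => ‖f y‖) x :=
      Filter.Eventually.of_forall fun y => by simp [h0]
    simp [hmin.fderiv_eq_zero]
  have hgauge : (innerSL ℝ (f x)).comp (fderiv ℝ f x) =
      (innerSL ℝ (f x)).comp (fderiv ℝ f x - B) := by
    ext v
    simp [hB]
  rw [(hf.hasFDerivAt.norm h0).fderiv, hgauge]
  calc ‖‖f x‖⁻¹ • (innerSL ℝ (f x)).comp (fderiv ℝ f x - B)‖
      ≤ ‖f x‖⁻¹ * (‖innerSL ℝ (f x)‖ * ‖fderiv ℝ f x - B‖) := by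
        rw [norm_smul, Real.norm_of_nonneg (by positivity)]
        gcongr
        exact ContinuousLinearMap.opNorm_comp_le _ _
    _ = ‖fderiv ℝ f x - B‖ := by
        rw [innerSL_apply_norm, ← mul_assoc, inv_mul_cancel₀ (norm_ne_zero_iff.mpr h0), one_mul]

end NormDeriv

theorem Complex.inner_self_mul_I_ofReal (z : ℂ) (t : ℝ) : inner ℝ z (I * z * t) = 0 := by
  simp only [Complex.inner, mul_re, mul_im, I_re, I_im, ofReal_re, ofReal_im, conj_re, conj_im]
  ring

theorem EuclideanSpace.opNorm_le_norm_apply_single {ι F : Type*} [Fintype ι] [DecidableEq ι]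
    [NormedAddCommGroup F] [NormedSpace ℝ F]
    (L : EuclideanSpace ℝ ι →L[ℝ] F) :
    ‖L‖ ≤ ‖WithLp.toLp 2 (fun i => L (EuclideanSpace.single i 1))‖ := by
  refine L.opNorm_le_bound (norm_nonneg _) fun v => ?_
  have hv : ∑ i, v i • EuclideanSpace.single i (1 : ℝ) = v := by
    simpa using (EuclideanSpace.basisFun ι ℝ).sum_repr v
  calc ‖L v‖ = ‖∑ i, v i • L (EuclideanSpace.single i 1)‖ := by
        nth_rewrite 1 [← hv]
        simp only [map_sum, map_smul]
    _ ≤ ∑ i, ‖v i‖ * ‖L (EuclideanSpace.single i 1)‖ := by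
        refine (norm_sum_le _ _).trans_eq ?_
        simp [norm_smul]
    _ ≤ √(∑ i, ‖v i‖ ^ 2) * √(∑ i, ‖L (EuclideanSpace.single i 1)‖ ^ 2) :=
        Real.sum_mul_le_sqrt_mul_sqrt _ _ _
    _ = _ := by
        rw [EuclideanSpace.norm_eq, PiLp.norm_eq_of_L2, mul_comm]

theorem stmt_0_general (d : ℕ) (f : EuclideanSpace ℝ (Fin d) → ℂ)
    (A : EuclideanSpace ℝ (Fin d) → EuclideanSpace ℝ (Fin d))
    (hf : ContDiff ℝ 1 f) :
    ∀ᵐ x : EuclideanSpace ℝ (Fin d),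
      ‖fderiv ℝ (fun y => ‖f y‖) x‖ ≤
        ‖(WithLp.equiv 2 (Fin d → ℂ)).symm
            (fun k : Fin d => fderiv ℝ f x (EuclideanSpace.single k 1) -
              Complex.I * (A x k : ℂ) * f x)‖ := by
  refine ae_of_all _ fun x => ?_
  let B := (Complex.I * f x) • Complex.ofRealCLM.comp (innerSL ℝ (A x))
  have hB : ∀ v, inner ℝ (f x) (B v) = 0 := fun v => by
    simpa [B, mul_right_comm] using Complex.inner_self_mul_I_ofReal (f x) (inner ℝ (A x) v)
  refine (norm_fderiv_norm_le_norm_fderiv_sub (hf.differentiable one_ne_zero x) hB).trans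
    ((EuclideanSpace.opNorm_le_norm_apply_single _).trans_eq ?_)
  congr
  ext k
  simp only [B, sub_apply, smul_apply,
    ContinuousLinearMap.comp_apply, coe_innerSL_apply, EuclideanSpace.inner_single_right,
    Real.ringHom_apply, one_mul, Complex.ofRealCLM_apply, smul_eq_mul]
  ring

/-- **Diamagnetic inequality.** If `f : ℝ^d → ℂ` is `C¹` and `A : ℝ^d → ℝ^d` is a `C¹`
magnetic potential, then the magnetic gradient `∇_A f = (∂f/∂x_k − i A_k f)_k` satisfies
`|∇_A f(x)| ≥ |∇|f|(x)|` for almost every `x`. -/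
theorem stmt_0 (d : ℕ) (f : EuclideanSpace ℝ (Fin d) → ℂ)
    (A : EuclideanSpace ℝ (Fin d) → EuclideanSpace ℝ (Fin d))
    (hf : ContDiff ℝ 1 f) (hA : ContDiff ℝ 1 A) :
    ∀ᵐ x : EuclideanSpace ℝ (Fin d),
      ‖fderiv ℝ (fun y => ‖f y‖) x‖ ≤
        ‖(WithLp.equiv 2 (Fin d → ℂ)).symm
            (fun k : Fin d => fderiv ℝ f x (EuclideanSpace.single k 1) -
              Complex.I * (A x k : ℂ) * f x)‖ :=
  stmt_0_general d f A hf
end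

section
/- Let V₀(x) = [[x⁴, x⁵],[x⁵, x⁶]] and let ℓ > 0. Then det(∫_{x−ℓ/2}^{x+ℓ/2} V₀(y) dy) = ℓ⁴x⁸/12 + (terms of lower degree in x), and tr(∫_{x−ℓ/2}^{x+ℓ/2} V₀(y) dy) = ℓx⁶ + (terms of lower degree in x). Consequently, liminf_{x→±∞} λ(∫_{x−ℓ/2}^{x+ℓ/2} V₀(y) dy)/x² ≥ ℓ³/12. -/
/-!
The three moments `∫ y ^ k` (`k = 4, 5, 6`) over the window are explicit polynomials in `x`,
which gives the determinant and the trace. For a real symmetric `2 × 2` matrix `A` with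
`tr A > 0`, Cayley–Hamilton yields `det A / tr A ≤ λ(A)`, while a test vector in the kernel
of `V₀(x)` bounds `λ` from above. Both bounds, divided by `x²`, tend to `ℓ³/12` as
`|x| → ∞`, so `λ / x²` actually converges to `ℓ³/12`.
-/

open scoped ComplexOrder
open MeasureTheory intervalIntegral

/-- The smallest eigenvalue of a Hermitian matrix, as the infimum of the quadratic form
over unit vectors. -/
noncomputable def minEig {m : ℕ} (A : Matrix (Fin m) (Fin m) ℂ) : ℝ :=
  sInf {r : ℝ | ∃ v : Fin m → ℂ, (∑ i, ‖v i‖ ^ 2) = 1 ∧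
    r = (dotProduct (star v) (A.mulVec v)).re}

/-- The entrywise integral `∫_{x−ℓ/2}^{x+ℓ/2} V₀(y) dy` of the matrix potential
`V₀(y) = [[y⁴, y⁵], [y⁵, y⁶]]`. -/
noncomputable def intV0 (ℓ x : ℝ) : Matrix (Fin 2) (Fin 2) ℂ :=
  !![((∫ y in (x - ℓ / 2)..(x + ℓ / 2), y ^ 4 : ℝ) : ℂ),
     ((∫ y in (x - ℓ / 2)..(x + ℓ / 2), y ^ 5 : ℝ) : ℂ);
     ((∫ y in (x - ℓ / 2)..(x + ℓ / 2), y ^ 5 : ℝ) : ℂ),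
     ((∫ y in (x - ℓ / 2)..(x + ℓ / 2), y ^ 6 : ℝ) : ℂ)]

open Polynomial Filter Topology Bornology Matrix

section RealSymmetric

variable (a b c : ℝ)

lemma re_det_ofReal_fin_two : (!![(a : ℂ), b; b, c]).det.re = a * c - b ^ 2 := by
  simp [det_fin_two_of, sq]

lemma re_trace_ofReal_fin_two : (!![(a : ℂ), b; b, c]).trace.re = a + c := by
  simp [trace_fin_two_of]

lemma re_star_dotProduct_mulVec_ofReal_fin_two (v : Fin 2 → ℂ) :
    (star v ⬝ᵥ (!![(a : ℂ), b; b, c] *ᵥ v)).re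
      = a * ((v 0).re ^ 2 + (v 0).im ^ 2) + c * ((v 1).re ^ 2 + (v 1).im ^ 2)
        + 2 * b * ((v 0).re * (v 1).re + (v 0).im * (v 1).im) := by
  simp only [dotProduct, Pi.star_apply, RCLike.star_def, mulVec, of_apply, cons_val',
    cons_val_fin_one, Fin.sum_univ_two, cons_val_zero, cons_val_one, Complex.add_re,
    Complex.mul_re, Complex.conj_re, Complex.ofReal_re, Complex.ofReal_im, zero_mul, sub_zero,
    Complex.conj_im, Complex.add_im, Complex.mul_im, add_zero, neg_mul, sub_neg_eq_add]
  ring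

variable {a b c}

-- Cayley–Hamilton: `(tr A) ⟪v, A v⟫ = det A ‖v‖² + ‖A v‖²`.
lemma det_le_trace_mul_re_star_dotProduct_mulVec {v : Fin 2 → ℂ} (hv : ∑ i, ‖v i‖ ^ 2 = 1) :
    a * c - b ^ 2 ≤ (a + c) * (star v ⬝ᵥ (!![(a : ℂ), b; b, c] *ᵥ v)).re := by
  rw [re_star_dotProduct_mulVec_ofReal_fin_two]
  simp only [Fin.sum_univ_two, Complex.sq_norm, Complex.normSq_apply] at hv
  set p := v 0; set q := v 1
  linear_combination (b ^ 2 - a * c) * hv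
    + (sq_nonneg (a * p.re + b * q.re) + sq_nonneg (a * p.im + b * q.im)
      + sq_nonneg (b * p.re + c * q.re) + sq_nonneg (b * p.im + c * q.im))

lemma det_div_trace_mem_lowerBounds (h : 0 < a + c) :
    (a * c - b ^ 2) / (a + c) ∈ lowerBounds {r : ℝ | ∃ v : Fin 2 → ℂ, ∑ i, ‖v i‖ ^ 2 = 1 ∧
      r = (star v ⬝ᵥ (!![(a : ℂ), b; b, c] *ᵥ v)).re} := by
  rintro r ⟨v, hv, rfl⟩
  rw [div_le_iff₀' h]
  exact det_le_trace_mul_re_star_dotProduct_mulVec hv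

lemma det_div_trace_le_minEig (h : 0 < a + c) :
    (a * c - b ^ 2) / (a + c) ≤ minEig !![(a : ℂ), b; b, c] :=
  le_csInf ⟨_, ![1, 0], by simp, rfl⟩ (det_div_trace_mem_lowerBounds h)

lemma minEig_le_of_sq_add_sq_eq_one (h : 0 < a + c) {p q : ℝ} (hpq : p ^ 2 + q ^ 2 = 1) :
    minEig !![(a : ℂ), b; b, c] ≤ a * p ^ 2 + 2 * b * p * q + c * q ^ 2 := by
  refine csInf_le ⟨_, det_div_trace_mem_lowerBounds h⟩ ⟨![(p : ℂ), q], ?_, ?_⟩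
  · simpa [Fin.sum_univ_two] using hpq
  · rw [re_star_dotProduct_mulVec_ofReal_fin_two]
    simp only [cons_val_zero, cons_val_one, cons_val_fin_one, Complex.ofReal_re,
      Complex.ofReal_im]
    ring

lemma minEig_le_div_one_add_sq (h : 0 < a + c) (t : ℝ) :
    minEig !![(a : ℂ), b; b, c] ≤ (a * t ^ 2 - 2 * b * t + c) / (1 + t ^ 2) := by
  have hs : √(1 + t ^ 2) ^ 2 = 1 + t ^ 2 := Real.sq_sqrt (by positivity)
  have hs0 : √(1 + t ^ 2) ≠ 0 := by positivity
  refine (minEig_le_of_sq_add_sq_eq_one h (p := t / √(1 + t ^ 2)) (q := -1 / √(1 + t ^ 2))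
    ?_).trans_eq ?_
  · field_simp
    linear_combination -hs
  · field_simp
    linear_combination (2 * t * b - t ^ 2 * a - c) * hs

end RealSymmetric

section Asymptotics

variable {𝕜 : Type*} [NormedField 𝕜]

lemma tendsto_eval_div_pow_cobounded {p : 𝕜[X]} {n : ℕ} (hp : p.degree < n) :
    Tendsto (fun x => p.eval x / x ^ n) (cobounded 𝕜) (𝓝 0) := by
  have hXn : ((X : 𝕜[X]) ^ n).degree = n := degree_X_pow n
  have := isLittleO_cobounded_of_degree_lt (hXn ▸ hp)
  simpa using this.tendsto_div_nhds_zero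

lemma tendsto_cobounded_monomial_add_eval_div {c d : 𝕜} (hd : d ≠ 0) {p q : 𝕜[X]} {n : ℕ}
    (hp : p.degree < n) (hq : q.degree < n) :
    Tendsto (fun x => (c * x ^ n + p.eval x) / (d * x ^ n + q.eval x)) (cobounded 𝕜)
      (𝓝 (c / d)) := by
  have hlim := ((tendsto_eval_div_pow_cobounded hp).const_add c).div
    ((tendsto_eval_div_pow_cobounded hq).const_add d) (by simpa using hd)
  rw [add_zero, add_zero] at hlim
  refine hlim.congr' ?_
  filter_upwards [eventually_ne_cobounded 0] with x hx
  simp only [Pi.div_apply]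
  field_simp

end Asymptotics

section Moments

variable (ℓ x : ℝ)

lemma integral_pow_four_centered :
    ∫ y in (x - ℓ / 2)..(x + ℓ / 2), y ^ 4 = ℓ * x ^ 4 + ℓ ^ 3 / 2 * x ^ 2 + ℓ ^ 5 / 80 := by
  rw [integral_pow]; ring

lemma integral_pow_five_centered :
    ∫ y in (x - ℓ / 2)..(x + ℓ / 2), y ^ 5
      = ℓ * x ^ 5 + 5 * ℓ ^ 3 / 6 * x ^ 3 + ℓ ^ 5 / 16 * x := by
  rw [integral_pow]; ring

lemma integral_pow_six_centered :
    ∫ y in (x - ℓ / 2)..(x + ℓ / 2), y ^ 6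
      = ℓ * x ^ 6 + 5 * ℓ ^ 3 / 4 * x ^ 4 + 3 * ℓ ^ 5 / 16 * x ^ 2 + ℓ ^ 7 / 448 := by
  rw [integral_pow]; ring

end Moments

noncomputable def intV0DetRemainder (ℓ : ℝ) : ℝ[X] :=
  C (ℓ ^ 6 / 180) * X ^ 6 + C (5 * ℓ ^ 8 / 672) * X ^ 4 - C (ℓ ^ 10 / 2240) * X ^ 2
    + C (ℓ ^ 12 / 35840)

noncomputable def intV0TraceRemainder (ℓ : ℝ) : ℝ[X] :=
  C (ℓ + 5 * ℓ ^ 3 / 4) * X ^ 4 + C (ℓ ^ 3 / 2 + 3 * ℓ ^ 5 / 16) * X ^ 2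
    + C (ℓ ^ 5 / 80 + ℓ ^ 7 / 448)

section IntV0

variable (ℓ : ℝ)

lemma degree_intV0DetRemainder_lt : (intV0DetRemainder ℓ).degree < 8 :=
  (show (intV0DetRemainder ℓ).degree ≤ 6 by unfold intV0DetRemainder; compute_degree).trans_lt
    (by decide)

lemma degree_intV0TraceRemainder_lt : (intV0TraceRemainder ℓ).degree < 6 :=
  (show (intV0TraceRemainder ℓ).degree ≤ 4 by unfold intV0TraceRemainder; compute_degree).trans_lt
    (by decide)

lemma degree_intV0TraceRemainder_mul_X_sq_lt : (intV0TraceRemainder ℓ * X ^ 2).degree < 8 :=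
  (show (intV0TraceRemainder ℓ * X ^ 2).degree ≤ (6 : WithBot ℕ) by
    unfold intV0TraceRemainder; compute_degree).trans_lt (by decide)

lemma re_det_intV0 (x : ℝ) :
    (intV0 ℓ x).det.re = ℓ ^ 4 * x ^ 8 / 12 + (intV0DetRemainder ℓ).eval x := by
  rw [intV0, re_det_ofReal_fin_two, integral_pow_four_centered, integral_pow_five_centered,
    integral_pow_six_centered]
  simp only [intV0DetRemainder, eval_add, eval_sub, eval_mul, eval_pow, eval_C, eval_X]
  ring

lemma re_trace_intV0 (x : ℝ) :
    (intV0 ℓ x).trace.re = ℓ * x ^ 6 + (intV0TraceRemainder ℓ).eval x := by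
  rw [intV0, re_trace_ofReal_fin_two, integral_pow_four_centered, integral_pow_six_centered]
  simp only [intV0TraceRemainder, eval_add, eval_mul, eval_pow, eval_C, eval_X]
  ring

variable {ℓ}

lemma integral_pow_four_add_integral_pow_six_pos (hℓ : 0 < ℓ) (x : ℝ) :
    0 < (∫ y in (x - ℓ / 2)..(x + ℓ / 2), y ^ 4) + ∫ y in (x - ℓ / 2)..(x + ℓ / 2), y ^ 6 := by
  rw [integral_pow_four_centered, integral_pow_six_centered]
  positivity

lemma det_div_trace_mul_sq_le_minEig_intV0_div_sq (hℓ : 0 < ℓ) (x : ℝ) :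
    (intV0 ℓ x).det.re / ((intV0 ℓ x).trace.re * x ^ 2) ≤ minEig (intV0 ℓ x) / x ^ 2 := by
  rw [← div_div]
  unfold intV0
  rw [re_det_ofReal_fin_two, re_trace_ofReal_fin_two]
  exact div_le_div_of_nonneg_right (det_div_trace_le_minEig (integral_pow_four_add_integral_pow_six_pos hℓ x))
    (sq_nonneg x)

-- The test vector `(x, -1)` spans the kernel of `V₀(x)`.
lemma minEig_intV0_div_sq_le (hℓ : 0 < ℓ) (x : ℝ) :
    minEig (intV0 ℓ x) / x ^ 2
      ≤ (ℓ ^ 3 / 12 * x ^ 4 + 3 * ℓ ^ 5 / 40 * x ^ 2 + ℓ ^ 7 / 448) / ((1 + x ^ 2) * x ^ 2) := by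
  rw [← div_div]
  refine div_le_div_of_nonneg_right ?_ (sq_nonneg x)
  refine (minEig_le_div_one_add_sq (integral_pow_four_add_integral_pow_six_pos hℓ x) x).trans_eq ?_
  rw [integral_pow_four_centered, integral_pow_five_centered, integral_pow_six_centered]
  ring

end IntV0

lemma tendsto_minEig_intV0_div_sq_cobounded {ℓ : ℝ} (hℓ : 0 < ℓ) :
    Tendsto (fun x => minEig (intV0 ℓ x) / x ^ 2) (cobounded ℝ) (𝓝 (ℓ ^ 3 / 12)) := by
  have hlower : Tendsto (fun x => (intV0 ℓ x).det.re / ((intV0 ℓ x).trace.re * x ^ 2))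
      (cobounded ℝ) (𝓝 (ℓ ^ 3 / 12)) := by
    convert tendsto_cobounded_monomial_add_eval_div (c := ℓ ^ 4 / 12) hℓ.ne'
      (degree_intV0DetRemainder_lt ℓ) (degree_intV0TraceRemainder_mul_X_sq_lt ℓ) using 1
    · funext x
      rw [re_det_intV0, re_trace_intV0, eval_mul, eval_pow, eval_X]
      ring
    · field_simp
  have hupper : Tendsto
      (fun x => (ℓ ^ 3 / 12 * x ^ 4 + 3 * ℓ ^ 5 / 40 * x ^ 2 + ℓ ^ 7 / 448) / ((1 + x ^ 2) * x ^ 2))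
      (cobounded ℝ) (𝓝 (ℓ ^ 3 / 12)) := by
    have hdeg : (C (3 * ℓ ^ 5 / 40) * X ^ 2 + C (ℓ ^ 7 / 448)).degree < 4 :=
      (show _ ≤ (2 : WithBot ℕ) by compute_degree).trans_lt (by decide)
    convert tendsto_cobounded_monomial_add_eval_div (c := ℓ ^ 3 / 12) one_ne_zero hdeg
      (show (X ^ 2 : ℝ[X]).degree < 4 by rw [degree_X_pow]; decide) using 1
    · funext x
      simp only [eval_add, eval_mul, eval_pow, eval_C, eval_X]
      ring
    · rw [div_one]
  exact tendsto_of_tendsto_of_tendsto_of_le_of_le hlower hupper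
    (det_div_trace_mul_sq_le_minEig_intV0_div_sq hℓ) (minEig_intV0_div_sq_le hℓ)

/-- For `V₀(x) = [[x⁴, x⁵], [x⁵, x⁶]]` and `ℓ > 0`:
`det(∫_{x−ℓ/2}^{x+ℓ/2} V₀) = ℓ⁴x⁸/12 + (lower degree terms in x)`,
`tr(∫_{x−ℓ/2}^{x+ℓ/2} V₀) = ℓx⁶ + (lower degree terms in x)`, and consequently
`liminf_{x→±∞} λ(∫_{x−ℓ/2}^{x+ℓ/2} V₀)/x² ≥ ℓ³/12`. -/
theorem stmt_4 (ℓ : ℝ) (hℓ : 0 < ℓ) :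
    (∃ p : Polynomial ℝ, p.degree < 8 ∧
      ∀ x : ℝ, (intV0 ℓ x).det.re = ℓ ^ 4 * x ^ 8 / 12 + p.eval x) ∧
    (∃ q : Polynomial ℝ, q.degree < 6 ∧
      ∀ x : ℝ, (intV0 ℓ x).trace.re = ℓ * x ^ 6 + q.eval x) ∧
    ℓ ^ 3 / 12 ≤ Filter.liminf (fun x : ℝ => minEig (intV0 ℓ x) / x ^ 2) Filter.atTop ∧
    ℓ ^ 3 / 12 ≤ Filter.liminf (fun x : ℝ => minEig (intV0 ℓ x) / x ^ 2) Filter.atBot := by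
  have hlim := tendsto_minEig_intV0_div_sq_cobounded hℓ
  refine ⟨⟨_, degree_intV0DetRemainder_lt ℓ, re_det_intV0 ℓ⟩,
    ⟨_, degree_intV0TraceRemainder_lt ℓ, re_trace_intV0 ℓ⟩, ?_, ?_⟩
  · exact (hlim.mono_left IsOrderBornology.atTop_le_cobounded).liminf_eq.ge
  · exact (hlim.mono_left IsOrderBornology.atBot_le_cobounded).liminf_eq.ge
end

section
/- If W : ℝ^d → H_m is locally integrable, non-negative, and there exist ℓ₀, δ, c > 0 such that for every cube Q of side length ≤ ℓ₀, the set {x ∈ Q : W(x) ≥ (δ/|Q|)∫_Q W} has Lebesgue measure ≥ c|Q|, then for every cube Q of side length ≤ ℓ₀ and every measurable A ⊆ Q with |A| ≥ (1 − c/2)|Q|, one has ∫_A W ≥ (cδ/2)∫_Q W (the matrix inequality meaning inequality of the associated quadratic forms). -/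
/-
For a fixed vector `v`, the quadratic form `f y = Re ⟪W y v, v⟫` is a non-negative integrable
function, and on the set where `W y ≥ (δ/|Q|) ∫_Q W` it is at least `t = (δ/|Q|) ∫_Q f`.
By inclusion–exclusion this superlevel set meets `A` in measure at least `c|Q|/2`, so Chebyshev's
inequality gives `∫_A f ≥ t · c|Q|/2 = (cδ/2) ∫_Q f`. Only the outer measure of the matrix
superlevel set enters, so no measurability of `W` beyond integrability is needed.
-/

open scoped ComplexOrder
open MeasureTheory

/-- The axis-parallel cube in `ℝ^d` with lower corner `x` and side length `ℓ`. -/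
def Cube {d : ℕ} (x : Fin d → ℝ) (ℓ : ℝ) : Set (Fin d → ℝ) :=
  {y | ∀ i, y i ∈ Set.Icc (x i) (x i + ℓ)}

/-- The entrywise integral of a matrix-valued function over a set. -/
noncomputable def matInt {d m : ℕ} (E : Set (Fin d → ℝ))
    (W : (Fin d → ℝ) → Matrix (Fin m) (Fin m) ℂ) : Matrix (Fin m) (Fin m) ℂ :=
  Matrix.of fun i j => ∫ y in E, W y i j

open Matrix

section Measure
variable {α : Type*} [MeasurableSpace α] {μ : Measure α}

theorem mul_measureReal_le_of_ofReal_mul_le {s t : Set α} {a : ℝ} (ht : μ t ≠ ⊤)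
    (h : ENNReal.ofReal a * μ s ≤ μ t) : a * μ.real s ≤ μ.real t :=
  calc a * μ.real s ≤ max a 0 * μ.real s := by gcongr; exact le_max_left a 0
    _ = (ENNReal.ofReal a * μ s).toReal := by
      rw [ENNReal.toReal_mul, ENNReal.toReal_ofReal', measureReal_def]
    _ ≤ μ.real t := ENNReal.toReal_mono ht h

theorem add_sub_one_mul_measureReal_le_inter {Q S A : Set α} {a b : ℝ} (hQ : μ Q ≠ ⊤)
    (hS : S ⊆ Q) (hA : MeasurableSet A) (hAQ : A ⊆ Q)
    (hSvol : a * μ.real Q ≤ μ.real S) (hAvol : b * μ.real Q ≤ μ.real A) :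
    (a + b - 1) * μ.real Q ≤ μ.real (S ∩ A) := by
  have hunion := measureReal_union_add_inter hA (μ := μ) (s := S)
    (measure_ne_top_of_subset hS hQ) (measure_ne_top_of_subset hAQ hQ)
  have hle : μ.real (S ∪ A) ≤ μ.real Q := measureReal_mono (Set.union_subset hS hAQ) hQ
  linarith

theorem mul_le_setIntegral_of_superlevel {Q A : Set α} {f : α → ℝ} {t c : ℝ} (hQ : μ Q ≠ ⊤)
    (hA : MeasurableSet A) (hAQ : A ⊆ Q) (hf : 0 ≤ᵐ[μ.restrict A] f)
    (hfA : IntegrableOn f A μ) (ht : 0 ≤ t)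
    (hlevel : ENNReal.ofReal c * μ Q ≤ μ {y ∈ Q | t ≤ f y})
    (hAvol : ENNReal.ofReal (1 - c / 2) * μ Q ≤ μ A) :
    c / 2 * μ.real Q * t ≤ ∫ y in A, f y ∂μ := by
  set S := {y ∈ Q | t ≤ f y}
  have hSQ : S ⊆ Q := fun y hy => hy.1
  have hSA : c / 2 * μ.real Q ≤ μ.real (S ∩ A) := by
    have := add_sub_one_mul_measureReal_le_inter hQ hSQ hA hAQ
      (mul_measureReal_le_of_ofReal_mul_le (measure_ne_top_of_subset hSQ hQ) hlevel)
      (mul_measureReal_le_of_ofReal_mul_le (measure_ne_top_of_subset hAQ hQ) hAvol)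
    linarith
  have hsub : μ.real (S ∩ A) ≤ (μ.restrict A).real {y | t ≤ f y} := by
    rw [measureReal_restrict_apply' hA]
    exact measureReal_mono (Set.inter_subset_inter_left _ fun y hy => hy.2)
      (measure_ne_top_of_subset Set.inter_subset_right (measure_ne_top_of_subset hAQ hQ))
  calc c / 2 * μ.real Q * t ≤ μ.real (S ∩ A) * t := by gcongr
    _ ≤ t * (μ.restrict A).real {y | t ≤ f y} := by rw [mul_comm]; gcongr
    _ ≤ ∫ y in A, f y ∂μ := mul_meas_ge_le_integral_of_nonneg hf hfA t

end Measure

namespace Matrix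
variable {n 𝕜 : Type*} [Fintype n] [RCLike 𝕜]

theorem IsHermitian.posSemidef_of_re_nonneg {A : Matrix n n 𝕜} (hA : A.IsHermitian)
    (h : ∀ x, 0 ≤ RCLike.re (star x ⬝ᵥ A *ᵥ x)) : A.PosSemidef :=
  .of_dotProduct_mulVec_nonneg hA fun x =>
    RCLike.nonneg_iff.mpr ⟨h x, hA.im_star_dotProduct_mulVec_self x⟩

theorem PosSemidef.re_dotProduct_mulVec_le {B C : Matrix n n 𝕜} (h : (B - C).PosSemidef)
    (x : n → 𝕜) : RCLike.re (star x ⬝ᵥ C *ᵥ x) ≤ RCLike.re (star x ⬝ᵥ B *ᵥ x) := by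
  have := (RCLike.nonneg_iff.mp (h.dotProduct_mulVec_nonneg x)).1
  rw [sub_mulVec, dotProduct_sub, map_sub] at this
  linarith

end Matrix

section Cube
variable {d : ℕ} (x : Fin d → ℝ) (ℓ : ℝ)

theorem cube_eq_pi : Cube x ℓ = Set.univ.pi fun i => Set.Icc (x i) (x i + ℓ) := by
  ext y; exact Set.mem_univ_pi.symm

theorem isCompact_cube : IsCompact (Cube x ℓ) := by
  rw [cube_eq_pi]; exact isCompact_univ_pi fun _ => isCompact_Icc

theorem volume_real_cube {ℓ : ℝ} (hℓ : 0 ≤ ℓ) : volume.real (Cube x ℓ) = ℓ ^ d := by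
  rw [cube_eq_pi, measureReal_def, volume_pi_pi]
  simp [Real.volume_Icc, hℓ]

end Cube

section matInt
variable {d m : ℕ} (E : Set (Fin d → ℝ)) (W : (Fin d → ℝ) → Matrix (Fin m) (Fin m) ℂ)

theorem matInt_isHermitian (hW : ∀ y, (W y).IsHermitian) : (matInt E W).IsHermitian := by
  ext i j
  simp only [conjTranspose_apply, matInt, of_apply, RCLike.star_def, ← integral_conj]
  exact integral_congr_ae (Filter.Eventually.of_forall fun y => (hW y).apply i j)

variable {E W}

theorem star_dotProduct_mulVec_eq_sum (B : Matrix (Fin m) (Fin m) ℂ) (v : Fin m → ℂ) :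
    star v ⬝ᵥ B *ᵥ v = ∑ i, ∑ j, star (v i) * B i j * v j := by
  simp [dotProduct, mulVec, Finset.mul_sum, mul_assoc]

theorem integrableOn_star_dotProduct_mulVec (hW : ∀ i j, IntegrableOn (fun y => W y i j) E)
    (v : Fin m → ℂ) : IntegrableOn (fun y => star v ⬝ᵥ W y *ᵥ v) E := by
  simp only [star_dotProduct_mulVec_eq_sum]
  exact integrable_finsetSum _ fun i _ => integrable_finsetSum _ fun j _ =>
    ((hW i j).const_mul _).mul_const _

theorem star_dotProduct_matInt_mulVec (hW : ∀ i j, IntegrableOn (fun y => W y i j) E)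
    (v : Fin m → ℂ) : star v ⬝ᵥ matInt E W *ᵥ v = ∫ y in E, star v ⬝ᵥ W y *ᵥ v := by
  have hterm i j : IntegrableOn (fun y => star (v i) * W y i j * v j) E :=
    ((hW i j).const_mul _).mul_const _
  simp only [star_dotProduct_mulVec_eq_sum]
  rw [integral_finsetSum _ fun i _ => integrable_finsetSum _ fun j _ => hterm i j]
  refine Finset.sum_congr rfl fun i _ => ?_
  rw [integral_finsetSum _ fun j _ => hterm i j]
  refine Finset.sum_congr rfl fun j _ => ?_
  rw [integral_mul_const, integral_const_mul]
  rfl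

theorem re_star_dotProduct_matInt_mulVec (hW : ∀ i j, IntegrableOn (fun y => W y i j) E)
    (v : Fin m → ℂ) :
    RCLike.re (star v ⬝ᵥ matInt E W *ᵥ v) = ∫ y in E, RCLike.re (star v ⬝ᵥ W y *ᵥ v) := by
  rw [star_dotProduct_matInt_mulVec hW, integral_re (integrableOn_star_dotProduct_mulVec hW v)]

end matInt

theorem stmt_5_general {d m : ℕ} (W : (Fin d → ℝ) → Matrix (Fin m) (Fin m) ℂ)
    (hloc : ∀ i j, LocallyIntegrable (fun y => W y i j) volume)
    (hpos : ∀ y, (W y).PosSemidef)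
    (ℓ₀ δ c : ℝ) (hδ : 0 < δ)
    (hAinf : ∀ (x : Fin d → ℝ) (ℓ : ℝ), 0 < ℓ → ℓ ≤ ℓ₀ →
      ENNReal.ofReal c * volume (Cube x ℓ) ≤
        volume {y ∈ Cube x ℓ | (W y - (δ / ℓ ^ d) • matInt (Cube x ℓ) W).PosSemidef}) :
    ∀ (x : Fin d → ℝ) (ℓ : ℝ), 0 < ℓ → ℓ ≤ ℓ₀ →
      ∀ A : Set (Fin d → ℝ), MeasurableSet A → A ⊆ Cube x ℓ →
        ENNReal.ofReal (1 - c / 2) * volume (Cube x ℓ) ≤ volume A →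
          (matInt A W - (c * δ / 2 : ℝ) • matInt (Cube x ℓ) W).PosSemidef := by
  intro x ℓ hℓ hℓℓ₀ A hA hAQ hAvol
  set Q := Cube x ℓ
  have hIQ i j : IntegrableOn (fun y => W y i j) Q :=
    (hloc i j).integrableOn_isCompact (isCompact_cube x ℓ)
  have hIA i j : IntegrableOn (fun y => W y i j) A := (hIQ i j).mono_set hAQ
  have hherm y := (hpos y).isHermitian
  refine ((matInt_isHermitian A W hherm).sub ((matInt_isHermitian Q W hherm).smul
    (IsSelfAdjoint.all _))).posSemidef_of_re_nonneg fun v => ?_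
  set f := fun y => RCLike.re (star v ⬝ᵥ W y *ᵥ v)
  have hf y : 0 ≤ f y := (RCLike.nonneg_iff.mp ((hpos y).dotProduct_mulVec_nonneg v)).1
  have hre (r : ℝ) (M : Matrix (Fin m) (Fin m) ℂ) :
      RCLike.re (star v ⬝ᵥ (r • M) *ᵥ v) = r * RCLike.re (star v ⬝ᵥ M *ᵥ v) := by
    rw [smul_mulVec, dotProduct_smul, RCLike.smul_re]
  rw [sub_mulVec, dotProduct_sub, map_sub, hre, re_star_dotProduct_matInt_mulVec hIA,
    re_star_dotProduct_matInt_mulVec hIQ, sub_nonneg]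
  have hlevel : {y ∈ Q | (W y - (δ / ℓ ^ d) • matInt Q W).PosSemidef} ⊆
      {y ∈ Q | δ / ℓ ^ d * ∫ z in Q, f z ≤ f y} := fun y ⟨hyQ, hy⟩ =>
    ⟨hyQ, by
      simpa only [hre, re_star_dotProduct_matInt_mulVec hIQ] using hy.re_dotProduct_mulVec_le v⟩
  have hbound := mul_le_setIntegral_of_superlevel (isCompact_cube x ℓ).measure_lt_top.ne hA hAQ
    (.of_forall hf) (integrableOn_star_dotProduct_mulVec hIA v).re
    (mul_nonneg (by positivity) (integral_nonneg hf))
    ((hAinf x ℓ hℓ hℓℓ₀).trans (measure_mono hlevel)) hAvol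
  calc c * δ / 2 * ∫ y in Q, f y = c / 2 * ℓ ^ d * (δ / ℓ ^ d * ∫ y in Q, f y) := by field_simp
    _ ≤ ∫ y in A, f y := volume_real_cube x hℓ.le ▸ hbound

/-- If `W : ℝ^d → H_m` is locally integrable, non-negative, and satisfies the matrix
`A_∞`-condition (for all small cubes `Q`, the set where `W(x) ≥ (δ/|Q|)∫_Q W` has measure
`≥ c|Q|`), then for every small cube `Q` and every measurable `A ⊆ Q` with
`|A| ≥ (1 − c/2)|Q|` one has `∫_A W ≥ (cδ/2) ∫_Q W` in the sense of quadratic forms. -/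
theorem stmt_5 {d m : ℕ} (W : (Fin d → ℝ) → Matrix (Fin m) (Fin m) ℂ)
    (hloc : ∀ i j, LocallyIntegrable (fun y => W y i j) volume)
    (hpos : ∀ y, (W y).PosSemidef)
    (ℓ₀ δ c : ℝ) (hℓ₀ : 0 < ℓ₀) (hδ : 0 < δ) (hc : 0 < c)
    (hAinf : ∀ (x : Fin d → ℝ) (ℓ : ℝ), 0 < ℓ → ℓ ≤ ℓ₀ →
      ENNReal.ofReal c * volume (Cube x ℓ) ≤
        volume {y ∈ Cube x ℓ | (W y - (δ / ℓ ^ d) • matInt (Cube x ℓ) W).PosSemidef}) :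
    ∀ (x : Fin d → ℝ) (ℓ : ℝ), 0 < ℓ → ℓ ≤ ℓ₀ →
      ∀ A : Set (Fin d → ℝ), MeasurableSet A → A ⊆ Cube x ℓ →
        ENNReal.ofReal (1 - c / 2) * volume (Cube x ℓ) ≤ volume A →
          (matInt A W - (c * δ / 2 : ℝ) • matInt (Cube x ℓ) W).PosSemidef :=
  stmt_5_general W hloc hpos ℓ₀ δ c hδ hAinf
end

section
/- Let S : ℝ^d → V(m) be measurable and Q a cube. If ω(Q,S) = 0 then there exists a subset F ⊆ Q with |Q \ F| = 0 and a unit vector u ∈ ℂ^m such that u ∈ S(x) for every x ∈ F. -/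
open MeasureTheory

noncomputable instance {m : ℕ} : MeasurableSpace (EuclideanSpace ℂ (Fin m)) := borel _
instance {m : ℕ} : BorelSpace (EuclideanSpace ℂ (Fin m)) := ⟨rfl⟩

/-- A subspace-valued mapping `S : ℝ^d → V(m)` is measurable if it is spanned pointwise by
finitely many measurable vector-valued functions. -/
def MeasSubspaceMap {d m : ℕ}
    (S : (Fin d → ℝ) → Submodule ℂ (EuclideanSpace ℂ (Fin m))) : Prop :=
  ∃ (k : ℕ) (v : Fin k → (Fin d → ℝ) → EuclideanSpace ℂ (Fin m)),
    (∀ i, Measurable (v i)) ∧ ∀ x, S x = Submodule.span ℂ (Set.range fun i => v i x)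

/-- The unit sections of `S` on `Q`: measurable `v` with `v(x) ∈ S(x)` and `|v(x)| = 1`
a.e. on `Q`. -/
def unitSections {d m : ℕ} (Q : Set (Fin d → ℝ))
    (S : (Fin d → ℝ) → Submodule ℂ (EuclideanSpace ℂ (Fin m))) :
    Set ((Fin d → ℝ) → EuclideanSpace ℂ (Fin m)) :=
  {v | Measurable v ∧ ∀ᵐ x ∂(volume.restrict Q), v x ∈ S x ∧ ‖v x‖ = 1}

/-- The average `(1/|Q|) ∫_Q v`. -/
noncomputable def avg {d m : ℕ} (Q : Set (Fin d → ℝ))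
    (v : (Fin d → ℝ) → EuclideanSpace ℂ (Fin m)) : EuclideanSpace ℂ (Fin m) :=
  (volume Q).toReal⁻¹ • ∫ y in Q, v y

/-- The oscillation `ω(Q,S)` of a subspace-valued mapping on a cube. -/
noncomputable def osc {d m : ℕ} (Q : Set (Fin d → ℝ))
    (S : (Fin d → ℝ) → Submodule ℂ (EuclideanSpace ℂ (Fin m))) : ℝ :=
  sInf ((fun v => Real.sqrt ((volume Q).toReal⁻¹ * ∫ y in Q, ‖v y - avg Q v‖ ^ 2)) ''
    unitSections Q S)

/-!
Since `ω(Q,S) = 0` there are unit sections `wₙ` whose variances `∫_Q ‖wₙ - ⨍ wₙ‖²` tend to `0`.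
Their averages lie in the unit ball, so along a subsequence they converge to some `u`, and the
variance decomposition `∫_Q ‖w - u‖² = ∫_Q ‖w - ⨍ w‖² + |Q| ‖⨍ w - u‖²` gives `wₙ → u` in `L²`.
A further subsequence converges a.e.; as every `S(y)` is closed and contains `wₙ(y)` for a.e. `y`,
`u ∈ S(y)` a.e., and `‖u‖ = 1` as an a.e. limit of unit vectors. Measurability of `S` is needed
to produce one measurable unit section (normalise the first nonvanishing spanning field): over an
empty set of sections the infimum defining `ω` would be the junk value `sInf ∅ = 0`.
-/

open Filter Topology Set

section Variance

variable {α E : Type*} [MeasurableSpace α] {μ : Measure α} [IsFiniteMeasure μ]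
  [NormedAddCommGroup E] [InnerProductSpace ℂ E] [CompleteSpace E]

theorem integral_norm_sub_sq_eq_add {f : α → E} (hf : MemLp f 2 μ) (c : E) :
    ∫ x, ‖f x - c‖ ^ 2 ∂μ =
      ∫ x, ‖f x - ⨍ y, f y ∂μ‖ ^ 2 ∂μ + μ.real univ * ‖(⨍ y, f y ∂μ) - c‖ ^ 2 := by
  set a := ⨍ y, f y ∂μ
  have hdev : MemLp (fun x => f x - a) 2 μ := hf.sub (memLp_const a)
  have hsq : Integrable (fun x => ‖f x - a‖ ^ 2) μ := hdev.integrable_norm_pow two_ne_zero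
  have hre : Integrable (fun x => RCLike.re (inner ℂ (a - c) (f x - a))) μ :=
    (hdev.integrable one_le_two |>.const_inner _).re
  have hcross : ∫ x, RCLike.re (inner ℂ (a - c) (f x - a)) ∂μ = 0 := by
    rw [integral_re (hdev.integrable one_le_two |>.const_inner _),
      integral_inner (hdev.integrable one_le_two), integral_sub (hf.integrable one_le_two)
      (integrable_const a), integral_const, measure_smul_average, sub_self, inner_zero_right,
      map_zero]
  calc ∫ x, ‖f x - c‖ ^ 2 ∂μ
      = ∫ x, (‖a - c‖ ^ 2 + 2 * RCLike.re (inner ℂ (a - c) (f x - a)) + ‖f x - a‖ ^ 2) ∂μ := by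
        congr with x
        rw [← norm_add_sq, sub_add_sub_cancel']
    _ = _ := by
        rw [integral_add ((integrable_const _).fun_add (hre.const_mul 2)) hsq,
          integral_add (integrable_const _) (hre.const_mul 2), integral_const_mul, hcross,
          integral_const, smul_eq_mul]
        ring

end Variance

section Convergence

variable {α ι E : Type*} [MeasurableSpace α] {μ : Measure α} [NormedAddCommGroup E]

theorem tendstoInMeasure_of_tendsto_integral_norm_sub_sq {l : Filter ι} {f : ι → α → E}
    {g : α → E} (hf : ∀ i, MemLp (f i) 2 μ) (hg : MemLp g 2 μ)
    (hfg : Tendsto (fun i => ∫ x, ‖f i x - g x‖ ^ 2 ∂μ) l (𝓝 0)) :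
    TendstoInMeasure μ f l g := by
  refine tendstoInMeasure_of_tendsto_eLpNorm two_ne_zero (fun i => (hf i).1) hg.1 ?_
  have hroot : Tendsto (fun t : ℝ => ENNReal.ofReal (t ^ (2⁻¹ : ℝ))) (𝓝 0) (𝓝 0) := by
    have := (ENNReal.continuous_ofReal.tendsto _).comp
      ((Real.continuousAt_rpow_const 0 (2⁻¹ : ℝ) (Or.inr (by norm_num))).tendsto)
    simpa [Function.comp_def] using this
  convert hroot.comp hfg using 1
  ext i
  simp [((hf i).sub hg).eLpNorm_eq_integral_rpow_norm two_ne_zero ENNReal.ofNat_ne_top]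

theorem ae_mem_of_tendstoInMeasure {K : α → Set E} (hK : ∀ x, IsClosed (K x)) {f : ℕ → α → E}
    {g : α → E} (hfK : ∀ n, ∀ᵐ x ∂μ, f n x ∈ K x) (hfg : TendstoInMeasure μ f atTop g) :
    ∀ᵐ x ∂μ, g x ∈ K x := by
  obtain ⟨ns, -, hns⟩ := hfg.exists_seq_tendsto_ae
  filter_upwards [ae_all_iff.2 hfK, hns] with x hxK hx
  exact (hK x).mem_of_tendsto hx (Eventually.of_forall fun n => hxK (ns n))

end Convergence

theorem exists_norm_eq_one_ae_mem_of_tendsto_integral_norm_sub_average_sq {α E : Type*}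
    [MeasurableSpace α] {μ : Measure α} [IsFiniteMeasure μ] [NeZero μ] [NormedAddCommGroup E]
    [InnerProductSpace ℂ E] [ProperSpace E] {K : α → Set E} (hK : ∀ x, IsClosed (K x))
    {f : ℕ → α → E} (hf : ∀ n, AEStronglyMeasurable (f n) μ)
    (hnorm : ∀ n, ∀ᵐ x ∂μ, ‖f n x‖ = 1) (hfK : ∀ n, ∀ᵐ x ∂μ, f n x ∈ K x)
    (hvar : Tendsto (fun n => ∫ x, ‖f n x - ⨍ y, f n y ∂μ‖ ^ 2 ∂μ) atTop (𝓝 0)) :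
    ∃ u : E, ‖u‖ = 1 ∧ ∀ᵐ x ∂μ, u ∈ K x := by
  have hL2 : ∀ n, MemLp (f n) 2 μ := fun n =>
    MemLp.of_bound (hf n) 1 ((hnorm n).mono fun x hx => hx.le)
  have hball : ∀ n, ⨍ y, f n y ∂μ ∈ Metric.closedBall (0 : E) 1 := fun n =>
    (convex_closedBall 0 1).average_mem Metric.isClosed_closedBall
      ((hnorm n).mono fun x hx => by simp [hx]) ((hL2 n).integrable one_le_two)
  obtain ⟨u, -, φ, hφ, hlim⟩ := (isCompact_closedBall (0 : E) 1).tendsto_subseq hball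
  have hL2conv : Tendsto (fun n => ∫ x, ‖f (φ n) x - u‖ ^ 2 ∂μ) atTop (𝓝 0) := by
    rw [funext fun n => integral_norm_sub_sq_eq_add (hL2 (φ n)) u]
    simpa using (hvar.comp hφ.tendsto_atTop).add
      (((hlim.sub_const u).norm.pow 2).const_mul (μ.real univ))
  have hsphere := ae_mem_of_tendstoInMeasure (K := fun x => K x ∩ Metric.sphere 0 1)
    (fun x => (hK x).inter Metric.isClosed_sphere)
    (fun n => (hfK (φ n)).and (hnorm (φ n)) |>.mono fun x hx => ⟨hx.1, by simpa using hx.2⟩)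
    (tendstoInMeasure_of_tendsto_integral_norm_sub_sq (fun n => hL2 (φ n)) (memLp_const u)
      hL2conv)
  obtain ⟨x, -, hu⟩ := hsphere.exists
  exact ⟨u, by simpa using hu, hsphere.mono fun x hx => hx.1⟩

theorem exists_measurable_unit_section {α E : Type*} [MeasurableSpace α] [NormedAddCommGroup E]
    [NormedSpace ℂ E] [MeasurableSpace E] [BorelSpace E] [SecondCountableTopology E]
    {S : α → Submodule ℂ E} {v : ℕ → α → E} (hv : ∀ n, Measurable (v n))
    (hvS : ∀ n x, v n x ∈ S x) (hne : ∀ x, ∃ n, v n x ≠ 0) :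
    ∃ g : α → E, Measurable g ∧ ∀ x, g x ∈ S x ∧ ‖g x‖ = 1 := by
  classical
  have hfirst : Measurable fun x => v (Nat.find (hne x)) x :=
    Measurable.find hv (fun n => (hv n (measurableSet_singleton 0)).compl) hne
  exact ⟨fun x => ((‖v (Nat.find (hne x)) x‖ : ℂ))⁻¹ • v (Nat.find (hne x)) x,
    (Complex.measurable_ofReal.comp hfirst.norm).inv.smul hfirst,
    fun x => ⟨Submodule.smul_mem _ _ (hvS _ x), norm_smul_inv_norm (Nat.find_spec (hne x))⟩⟩

theorem exists_subset_measure_diff_eq_zero_of_ae_restrict {α : Type*} [MeasurableSpace α]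
    {μ : Measure α} {s : Set α} {p : α → Prop} (hs : MeasurableSet s)
    (h : ∀ᵐ x ∂μ.restrict s, p x) : ∃ F ⊆ s, μ (s \ F) = 0 ∧ ∀ x ∈ F, p x := by
  refine ⟨s ∩ {x | p x}, inter_subset_left, ?_, fun x hx => hx.2⟩
  rw [ae_restrict_iff' hs, ae_iff] at h
  convert h using 2
  ext x
  simp

theorem cube_eq_Icc {d : ℕ} (x : Fin d → ℝ) (ℓ : ℝ) : Cube x ℓ = Icc x (x + fun _ => ℓ) := by
  ext y
  simp [Cube, Pi.le_def, forall_and]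

theorem measurableSet_cube {d : ℕ} (x : Fin d → ℝ) (ℓ : ℝ) : MeasurableSet (Cube x ℓ) :=
  cube_eq_Icc x ℓ ▸ measurableSet_Icc

theorem volume_cube {d : ℕ} (x : Fin d → ℝ) (ℓ : ℝ) :
    volume (Cube x ℓ) = ENNReal.ofReal ℓ ^ d := by
  simp [cube_eq_Icc, Real.volume_Icc_pi]

theorem avg_eq_setAverage {d m : ℕ} (Q : Set (Fin d → ℝ))
    (v : (Fin d → ℝ) → EuclideanSpace ℂ (Fin m)) : avg Q v = ⨍ y in Q, v y := by
  rw [avg, average_eq, measureReal_restrict_apply_univ, measureReal_def]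

theorem MeasSubspaceMap.exists_measurable_unit_section {d m : ℕ}
    {S : (Fin d → ℝ) → Submodule ℂ (EuclideanSpace ℂ (Fin m))} (hS : MeasSubspaceMap S)
    (hnt : ∀ x, S x ≠ ⊥) :
    ∃ g : (Fin d → ℝ) → EuclideanSpace ℂ (Fin m), Measurable g ∧ ∀ x, g x ∈ S x ∧ ‖g x‖ = 1 := by
  obtain ⟨k, v, hv, hspan⟩ := hS
  refine _root_.exists_measurable_unit_section
    (v := fun n x => if h : n < k then v ⟨n, h⟩ x else 0) (fun n => ?_) (fun n x => ?_) fun x => ?_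
  · by_cases h : n < k <;> simp [h, hv, measurable_const]
  · split_ifs
    · exact hspan x ▸ Submodule.subset_span ⟨_, rfl⟩
    · exact (S x).zero_mem
  · by_contra! h
    refine hnt x (hspan x ▸ Submodule.span_eq_bot.2 ?_)
    rintro _ ⟨i, rfl⟩
    simpa [i.isLt] using h i

theorem exists_seq_mem_unitSections_tendsto_of_osc_eq_zero {d m : ℕ} {Q : Set (Fin d → ℝ)}
    {S : (Fin d → ℝ) → Submodule ℂ (EuclideanSpace ℂ (Fin m))} (hQ₀ : volume Q ≠ 0)
    (hQ : volume Q ≠ ⊤) (hne : (unitSections Q S).Nonempty) (h0 : osc Q S = 0) :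
    ∃ w : ℕ → (Fin d → ℝ) → EuclideanSpace ℂ (Fin m), (∀ n, w n ∈ unitSections Q S) ∧
      Tendsto (fun n => ∫ y in Q, ‖w n y - avg Q (w n)‖ ^ 2) atTop (𝓝 0) := by
  set T := (volume Q).toReal
  set J := fun v : (Fin d → ℝ) → EuclideanSpace ℂ (Fin m) => ∫ y in Q, ‖v y - avg Q v‖ ^ 2
  obtain ⟨s, -, hs, hs_mem⟩ := exists_seq_tendsto_sInf (hne.image fun v => √(T⁻¹ * J v))
    ⟨0, by rintro _ ⟨v, -, rfl⟩; exact Real.sqrt_nonneg _⟩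
  choose w hw hws using hs_mem
  refine ⟨w, hw, ?_⟩
  change Tendsto s atTop (𝓝 (osc Q S)) at hs
  have hJ : ∀ n, J (w n) = T * s n ^ 2 := fun n => by
    rw [← hws, Real.sq_sqrt (by positivity), ← mul_assoc,
      mul_inv_cancel₀ (ENNReal.toReal_ne_zero.2 ⟨hQ₀, hQ⟩), one_mul]
  convert (hs.pow 2).const_mul T using 2 with n
  · exact hJ n
  · simp [h0]

/-- If the oscillation of a measurable subspace-valued mapping `S` on a cube `Q`
vanishes, then there is a full-measure subset `F ⊆ Q` and a unit vector `u ∈ ℂ^m` with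
`u ∈ S(x)` for every `x ∈ F`. -/
theorem stmt_7 {d m : ℕ} (S : (Fin d → ℝ) → Submodule ℂ (EuclideanSpace ℂ (Fin m)))
    (hS : MeasSubspaceMap S) (hnt : ∀ x, S x ≠ ⊥)
    (x : Fin d → ℝ) (ℓ : ℝ) (hℓ : 0 < ℓ)
    (h0 : osc (Cube x ℓ) S = 0) :
    ∃ F ⊆ Cube x ℓ, volume (Cube x ℓ \ F) = 0 ∧
      ∃ u : EuclideanSpace ℂ (Fin m), ‖u‖ = 1 ∧ ∀ y ∈ F, u ∈ S y := by
  have hQ₀ : volume (Cube x ℓ) ≠ 0 := by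
    rw [volume_cube]
    exact pow_ne_zero _ (ENNReal.ofReal_pos.2 hℓ).ne'
  have hQ : volume (Cube x ℓ) ≠ ⊤ := by
    rw [volume_cube]
    exact ENNReal.pow_ne_top ENNReal.ofReal_ne_top
  have : IsFiniteMeasure (volume.restrict (Cube x ℓ)) := isFiniteMeasure_restrict.2 hQ
  have : NeZero (volume.restrict (Cube x ℓ)) := ⟨by simpa using hQ₀⟩
  obtain ⟨g, hg, hgS⟩ := hS.exists_measurable_unit_section hnt
  obtain ⟨w, hw, hvar⟩ :=
    exists_seq_mem_unitSections_tendsto_of_osc_eq_zero hQ₀ hQ ⟨g, hg, ae_of_all _ hgS⟩ h0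
  obtain ⟨u, hu, hae⟩ := exists_norm_eq_one_ae_mem_of_tendsto_integral_norm_sub_average_sq
    (fun y => (S y).closed_of_finiteDimensional) (fun n => (hw n).1.aestronglyMeasurable)
    (fun n => (hw n).2.mono fun _ h => h.2) (fun n => (hw n).2.mono fun _ h => h.1)
    (by simpa only [avg_eq_setAverage] using hvar)
  obtain ⟨F, hFQ, hF, huF⟩ :=
    exists_subset_measure_diff_eq_zero_of_ae_restrict (measurableSet_cube x ℓ) hae
  exact ⟨F, hFQ, hF, u, hu, huF⟩
end

section
/- Let S₁,…,S_N be linear subspaces of ℂ^m. Then the following are equivalent: (a) there exists δ > 0 such that for each j and each v ∈ S_j there exists k ≠ j with |⟨v,w⟩| ≤ (1−δ)|v||w| for all w ∈ S_k; (b) the intersection S₁ ∩ ⋯ ∩ S_N = {0}. -/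
/-!
If every `v ∈ S_j` has `|⟨v, w⟩| ≤ (1 - δ)|v||w|` on some other `S_k`, a vector of the
intersection, paired with itself, has `|v|² ≤ (1 - δ)|v|²`, so it vanishes.

Conversely, `|⟨v, w⟩| ≤ |P_k v| |w|` for `w ∈ S_k`, where `P_k` is the orthogonal projection
onto `S_k`, and `|P_k v| < |v|` unless `v ∈ S_k`. If the intersection is trivial, every
nonzero `v ∈ S_j` lies outside some `S_k`, `k ≠ j`, so the continuous function
`v ↦ min_{k ≠ j} |P_k v|` stays below `1` on the unit sphere of `S_j`. By compactness its
maximum `c_j` is `< 1`, and by homogeneity `min_{k ≠ j} |P_k v| ≤ c_j |v|` on all of `S_j`;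
then `δ = 1 - max_j c_j` works.
-/

open Filter Topology Finset Metric

section Homogeneous

variable {𝕜 E : Type*} [RCLike 𝕜] [NormedAddCommGroup E] [NormedSpace 𝕜 E]
  [FiniteDimensional 𝕜 E]

theorem exists_lt_one_forall_le_mul_norm {g : E → ℝ} (hg : Continuous g)
    (hsmul : ∀ (a : 𝕜) v, g (a • v) = ‖a‖ * g v) (hlt : ∀ v ≠ 0, g v < ‖v‖) :
    ∃ c < 1, ∀ v, g v ≤ c * ‖v‖ := by
  have := FiniteDimensional.proper_rclike 𝕜 E
  have hg_eq (v : E) : g v = ‖v‖ * g ((‖v‖⁻¹ : 𝕜) • v) := by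
    rcases eq_or_ne v 0 with rfl | hv
    · simpa using hsmul 0 0
    · rw [hsmul, ← mul_assoc, norm_inv, RCLike.norm_ofReal, abs_norm,
        mul_inv_cancel₀ (norm_ne_zero_iff.2 hv), one_mul]
  rcases subsingleton_or_nontrivial E with hE | hE
  · exact ⟨0, one_pos, fun v => by rw [Subsingleton.elim v 0, hg_eq 0]; simp⟩
  obtain ⟨v₀, hv₀, hmax⟩ := (isCompact_sphere (0 : E) 1).exists_isMaxOn
    (Set.nonempty_coe_sort.1 (NormedSpace.sphere_nonempty_rclike 𝕜 zero_le_one)) hg.continuousOn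
  have hv₀_norm : ‖v₀‖ = 1 := by simpa using hv₀
  refine ⟨g v₀, hv₀_norm ▸ hlt v₀ (ne_zero_of_mem_unit_sphere ⟨v₀, hv₀⟩), fun v => ?_⟩
  rcases eq_or_ne v 0 with rfl | hv
  · rw [hg_eq 0]; simp
  · rw [hg_eq v, mul_comm (g v₀)]
    have hu : (‖v‖⁻¹ : 𝕜) • v ∈ sphere (0 : E) 1 := by simpa using norm_smul_inv_norm hv
    exact mul_le_mul_of_nonneg_left (hmax hu) (norm_nonneg v)

theorem exists_lt_one_forall_exists_le_mul_norm {ι : Type*} {s : Finset ι} (hs : s.Nonempty)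
    {g : ι → E → ℝ} (hg : ∀ i ∈ s, Continuous (g i))
    (hsmul : ∀ i ∈ s, ∀ (a : 𝕜) v, g i (a • v) = ‖a‖ * g i v)
    (hlt : ∀ v ≠ 0, ∃ i ∈ s, g i v < ‖v‖) :
    ∃ c < 1, ∀ v, ∃ i ∈ s, g i v ≤ c * ‖v‖ := by
  obtain ⟨c, hc, hle⟩ := exists_lt_one_forall_le_mul_norm (𝕜 := 𝕜)
    (g := fun v => s.inf' hs (g · v)) (Continuous.finset_inf'_apply hs hg)
    (fun a v => by
      rw [apply_inf'_eq_inf'_comp hs _ (monotone_mul_left_of_nonneg (norm_nonneg a)).map_inf]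
      exact inf'_congr hs rfl fun i hi => hsmul i hi a v)
    (fun v hv => by
      obtain ⟨i, hi, hiv⟩ := hlt v hv
      exact (inf'_le _ hi).trans_lt hiv)
  refine ⟨c, hc, fun v => ?_⟩
  obtain ⟨i, hi, heq⟩ := s.exists_mem_eq_inf' hs (g · v)
  exact ⟨i, hi, heq ▸ hle v⟩

end Homogeneous

section Projection

variable {𝕜 E : Type*} [RCLike 𝕜] [NormedAddCommGroup E] [InnerProductSpace 𝕜 E]

theorem eq_zero_of_norm_inner_self_le {v : E} {δ : ℝ} (hδ : 0 < δ)
    (h : ‖(inner 𝕜 v v : 𝕜)‖ ≤ (1 - δ) * ‖v‖ * ‖v‖) : v = 0 := by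
  rw [inner_self_eq_norm_sq_to_K, norm_pow, RCLike.norm_ofReal, abs_norm] at h
  have hsq : δ * ‖v‖ ^ 2 ≤ 0 := by linarith
  exact norm_eq_zero.1 <| pow_eq_zero_iff two_ne_zero |>.1 <|
    (nonpos_of_mul_nonpos_right hsq hδ).antisymm (sq_nonneg _)

namespace Submodule

variable (K : Submodule 𝕜 E) [K.HasOrthogonalProjection]

theorem norm_inner_le_norm_starProjection_mul_norm (v : E) {w : E} (hw : w ∈ K) :
    ‖(inner 𝕜 v w : 𝕜)‖ ≤ ‖K.starProjection v‖ * ‖w‖ := by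
  calc ‖(inner 𝕜 v w : 𝕜)‖ = ‖(inner 𝕜 (K.starProjection v) w : 𝕜)‖ := by
        rw [K.inner_starProjection_left_eq_right, K.starProjection_eq_self_iff.2 hw]
    _ ≤ ‖K.starProjection v‖ * ‖w‖ := norm_inner_le_norm _ _

theorem norm_starProjection_lt_norm {v : E} (hv : v ∉ K) : ‖K.starProjection v‖ < ‖v‖ :=
  (K.norm_starProjection_apply_le v).lt_of_ne (mt (K.mem_iff_norm_starProjection v).2 hv)

end Submodule

theorem exists_lt_one_forall_exists_norm_starProjection_le [FiniteDimensional 𝕜 E]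
    {ι : Type*} [Fintype ι] [DecidableEq ι] [Nontrivial ι] {S : ι → Submodule 𝕜 E}
    (hS : ⨅ i, S i = ⊥) (j : ι) :
    ∃ c < 1, ∀ v ∈ S j, ∃ k ≠ j, ‖(S k).starProjection v‖ ≤ c * ‖v‖ := by
  obtain ⟨k₀, hk₀⟩ := exists_ne j
  obtain ⟨c, hc, h⟩ := exists_lt_one_forall_exists_le_mul_norm (𝕜 := 𝕜) (E := S j)
    (s := univ.erase j) ⟨k₀, mem_erase.2 ⟨hk₀, mem_univ _⟩⟩
    (g := fun k v => ‖(S k).starProjection (v : E)‖) (fun _ _ => by fun_prop)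
    (fun _ _ a v => by simp [norm_smul])
    (fun v hv => by
      obtain ⟨k, hk⟩ : ∃ k, (v : E) ∉ S k := by
        by_contra! hall
        exact hv (Subtype.ext ((Submodule.mem_bot 𝕜).1 (hS ▸ Submodule.mem_iInf _ |>.2 hall)))
      have hkj : k ≠ j := by rintro rfl; exact hk v.2
      exact ⟨k, mem_erase.2 ⟨hkj, mem_univ _⟩, (S k).norm_starProjection_lt_norm hk⟩)
  refine ⟨c, hc, fun v hv => ?_⟩
  obtain ⟨k, hk, hle⟩ := h ⟨v, hv⟩
  exact ⟨k, ne_of_mem_erase hk, hle⟩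

end Projection

/-- For subspaces `S₁, …, S_N` of `ℂ^m` (`N ≥ 2`), the quantitative angle condition —
there is `δ > 0` such that for each `j` and each `v ∈ S_j` there is `k ≠ j` with
`|⟨v,w⟩| ≤ (1−δ)|v||w|` for all `w ∈ S_k` — holds if and only if `S₁ ∩ ⋯ ∩ S_N = {0}`. -/
theorem stmt_9 {m N : ℕ} (hN : 2 ≤ N)
    (S : Fin N → Submodule ℂ (EuclideanSpace ℂ (Fin m))) :
    (∃ δ > (0 : ℝ), ∀ j, ∀ v ∈ S j, ∃ k ≠ j, ∀ w ∈ S k,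
        ‖(inner ℂ v w : ℂ)‖ ≤ (1 - δ) * ‖v‖ * ‖w‖) ↔
      (⨅ j, S j) = ⊥ := by
  have : Nontrivial (Fin N) := Fin.nontrivial_iff_two_le.2 hN
  constructor
  · rintro ⟨δ, hδ, h⟩
    refine (Submodule.eq_bot_iff _).2 fun v hv => ?_
    rw [Submodule.mem_iInf] at hv
    obtain ⟨k, -, hk⟩ := h ⟨0, by omega⟩ v (hv _)
    exact eq_zero_of_norm_inner_self_le hδ (hk v (hv k))
  · intro hS
    have key (j : Fin N) : ∀ᶠ c in 𝓝[<] (1 : ℝ),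
        ∀ v ∈ S j, ∃ k ≠ j, ‖(S k).starProjection v‖ ≤ c * ‖v‖ := by
      obtain ⟨c, hc, h⟩ := exists_lt_one_forall_exists_norm_starProjection_le hS j
      filter_upwards [Ioo_mem_nhdsLT hc] with c' hc' v hv
      obtain ⟨k, hk, hle⟩ := h v hv
      exact ⟨k, hk, hle.trans (by gcongr; exact hc'.1.le)⟩
    obtain ⟨c, hall, hc⟩ := ((eventually_all.2 key).and self_mem_nhdsWithin).exists
    refine ⟨1 - c, sub_pos.2 hc, fun j v hv => ?_⟩
    obtain ⟨k, hk, hle⟩ := hall j v hv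
    refine ⟨k, hk, fun w hw => ?_⟩
    calc ‖(inner ℂ v w : ℂ)‖ ≤ ‖(S k).starProjection v‖ * ‖w‖ :=
          (S k).norm_inner_le_norm_starProjection_mul_norm v hw
      _ ≤ (1 - (1 - c)) * ‖v‖ * ‖w‖ := by rw [sub_sub_cancel]; gcongr
end

section
/- Let ρ : ℝ^d → (0,∞) be a Borel radius function with constant C (i.e., C⁻¹ρ(x) ≤ ρ(y) ≤ Cρ(x) whenever |y−x| < ρ(x)), and let d_ρ be the associated Riemannian-type distance, d_ρ(x,y) = inf over piecewise C¹ curves γ from x to y of ∫ |γ'(t)|/ρ(γ(t)) dt. Then d_ρ is a metric, and for all x and all r ≤ 1: B_ρ(x, C⁻¹r) ⊆ B(x, rρ(x)) ⊆ B_ρ(x, Cr), where B_ρ denotes metric balls for d_ρ and B denotes Euclidean balls. -/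
open MeasureTheory

/-- A piecewise `C¹` curve parametrized by `[0,1]`. -/
def PiecewiseC1 {d : ℕ} (γ : ℝ → EuclideanSpace ℝ (Fin d)) : Prop :=
  ContinuousOn γ (Set.Icc 0 1) ∧
    ∃ (n : ℕ) (t : Fin (n + 1) → ℝ), StrictMono t ∧ t 0 = 0 ∧ t (Fin.last n) = 1 ∧
      ∀ i : Fin n, ContDiffOn ℝ 1 γ (Set.Icc (t i.castSucc) (t i.succ))

/-- The Riemannian-type distance associated to a radius function `ρ`:
`d_ρ(x,y) = inf_γ ∫ |γ'(t)|/ρ(γ(t)) dt` over piecewise `C¹` curves from `x` to `y`. -/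
noncomputable def dRho {d : ℕ} (ρ : EuclideanSpace ℝ (Fin d) → ℝ)
    (x y : EuclideanSpace ℝ (Fin d)) : ℝ :=
  sInf {L | ∃ γ : ℝ → EuclideanSpace ℝ (Fin d), PiecewiseC1 γ ∧ γ 0 = x ∧ γ 1 = y ∧
    L = ∫ t in (0 : ℝ)..1, ‖deriv γ t‖ / ρ (γ t)}

/-!
Near `x`, a radius function is comparable to the constant `ρ x` on `B(x, ρ x)`. The segment from
`x` to a point of `B(x, r ρ x)` stays in that ball, where `ρ ≥ C⁻¹ ρ x`, so its `ρ`-length is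
below `C r`. Conversely, a curve from `x` to `y` either stays in `B(x, ρ x)`, where `ρ ≤ C ρ x`,
or leaves it at a first exit time `u`; in both cases its `ρ`-length up to `u` is at least
`|γ u - x| / (C ρ x) ≥ min (|y - x|, ρ x) / (C ρ x)`. This lower bound
`d_ρ(x, y) ≥ C⁻¹ min (|y - x| / ρ x, 1)` gives definiteness and the first inclusion; symmetry and
the triangle inequality come from reversing and concatenating curves.
-/

open Set Filter Topology
open scoped Interval

theorem Fin.exists_mem_Ioo_of_notMem_range {α : Type*} [LinearOrder α] {n : ℕ}
    {t : Fin (n + 1) → α} {s : α} (h0 : t 0 < s) (hlast : s < t (Fin.last n))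
    (hs : s ∉ range t) : ∃ i : Fin n, s ∈ Ioo (t i.castSucc) (t i.succ) := by
  by_contra! h
  have hlt : ∀ i, t i < s := by
    intro i
    induction i using Fin.induction with
    | zero => exact h0
    | succ i ih => exact lt_of_le_of_ne (not_lt.1 fun h' => h i ⟨ih, h'⟩) fun he => hs ⟨_, he⟩
  exact (hlt (Fin.last n)).not_gt hlast

theorem Fin.exists_chain_append {α : Type*} {P : α → α → Prop} {n₁ n₂ : ℕ}
    {t₁ : Fin (n₁ + 1) → α} {t₂ : Fin (n₂ + 1) → α} (h : t₁ (Fin.last n₁) = t₂ 0)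
    (h₁ : ∀ i : Fin n₁, P (t₁ i.castSucc) (t₁ i.succ))
    (h₂ : ∀ i : Fin n₂, P (t₂ i.castSucc) (t₂ i.succ)) :
    ∃ t : Fin (n₁ + n₂ + 1) → α, t 0 = t₁ 0 ∧ t (Fin.last _) = t₂ (Fin.last n₂) ∧
      ∀ i : Fin (n₁ + n₂), P (t i.castSucc) (t i.succ) := by
  let t : Fin (n₁ + n₂ + 1) → α := fun i =>
    if hi : (i : ℕ) ≤ n₁ then t₁ ⟨i, by omega⟩ else t₂ ⟨i - n₁, by omega⟩
  have ht₂ : ∀ (i : Fin (n₁ + n₂ + 1)) (hi : n₁ ≤ i), t i = t₂ ⟨i - n₁, by omega⟩ := by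
    intro i hi
    by_cases hi' : (i : ℕ) ≤ n₁
    · have hin : (i : ℕ) = n₁ := le_antisymm hi' hi
      simp only [t, dif_pos hi', hin, Nat.sub_self]
      exact h
    · simp only [t, dif_neg hi']
  refine ⟨t, by simp [t], ?_, fun i => ?_⟩
  · rw [ht₂ _ (by simp)]
    congr 1
    ext
    simp
  by_cases hi : (i : ℕ) < n₁
  · simp only [t, Fin.val_castSucc, Fin.val_succ, dif_pos hi.le, dif_pos (Nat.succ_le_of_lt hi)]
    exact h₁ ⟨i, hi⟩
  · rw [ht₂ _ (by simp; omega), ht₂ _ (by simp; omega)]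
    convert h₂ ⟨i - n₁, by omega⟩ using 2 <;> (ext; simp <;> omega)

theorem exists_exit_time {f : ℝ → ℝ} {a b c : ℝ} (hab : a ≤ b) (hf : ContinuousOn f (Icc a b)) :
    ∃ u ∈ Icc a b, (∀ s ∈ Ico a u, f s < c) ∧ (u = b ∨ c ≤ f u) := by
  by_cases h : ∃ s ∈ Icc a b, c ≤ f s
  · set A := Icc a b ∩ f ⁻¹' Ici c
    have hA : IsClosed A := hf.preimage_isClosed_of_isClosed isClosed_Icc isClosed_Ici
    have hbdd : BddBelow A := ⟨a, fun s hs => hs.1.1⟩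
    have hmem : sInf A ∈ A := hA.csInf_mem h hbdd
    refine ⟨sInf A, hmem.1, fun s hs => not_le.1 fun hcs => ?_, Or.inr hmem.2⟩
    exact hs.2.not_ge (csInf_le hbdd ⟨⟨hs.1, hs.2.le.trans hmem.1.2⟩, hcs⟩)
  · push Not at h
    exact ⟨b, right_mem_Icc.2 hab, fun s hs => h s ⟨hs.1, hs.2.le⟩, Or.inl rfl⟩

section Curves

variable {E : Type*} [NormedAddCommGroup E] [NormedSpace ℝ E] {γ γ' : ℝ → E} {a b : ℝ}

def PiecewiseC1On (γ : ℝ → E) (a b : ℝ) : Prop :=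
  ContinuousOn γ (Icc a b) ∧
    ∃ (n : ℕ) (t : Fin (n + 1) → ℝ), StrictMono t ∧ t 0 = a ∧ t (Fin.last n) = b ∧
      ∀ i : Fin n, ContDiffOn ℝ 1 γ (Icc (t i.castSucc) (t i.succ))

theorem piecewiseC1_iff {d : ℕ} {γ : ℝ → EuclideanSpace ℝ (Fin d)} :
    PiecewiseC1 γ ↔ PiecewiseC1On γ 0 1 :=
  Iff.rfl

theorem ContDiff.piecewiseC1On (h : ContDiff ℝ 1 γ) (hab : a < b) : PiecewiseC1On γ a b :=
  ⟨h.continuous.continuousOn, 1, ![a, b], Fin.strictMono_iff_lt_succ.2 (by simpa using hab),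
    rfl, rfl, fun _ => h.contDiffOn⟩

namespace PiecewiseC1On

theorem le (h : PiecewiseC1On γ a b) : a ≤ b := by
  obtain ⟨-, n, t, ht, rfl, rfl, -⟩ := h
  exact ht.monotone (Fin.zero_le _)

theorem congr (h : PiecewiseC1On γ a b) (heq : EqOn γ' γ (Icc a b)) : PiecewiseC1On γ' a b := by
  obtain ⟨hc, n, t, ht, rfl, rfl, hp⟩ := h
  refine ⟨hc.congr heq, n, t, ht, rfl, rfl, fun i => (hp i).congr (heq.mono ?_)⟩
  exact Icc_subset_Icc (ht.monotone (Fin.zero_le _)) (ht.monotone (Fin.le_last _))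

theorem comp_mul_add (h : PiecewiseC1On γ a b) {c e a' b' : ℝ} (hc : 0 < c)
    (ha : c * a' + e = a) (hb : c * b' + e = b) :
    PiecewiseC1On (fun s => γ (c * s + e)) a' b' := by
  obtain ⟨hcont, n, t, ht, rfl, rfl, hp⟩ := h
  have hmaps : ∀ u v, MapsTo (fun s => c * s + e) (Icc ((u - e) / c) ((v - e) / c)) (Icc u v) := by
    rintro u v s ⟨hu, hv⟩
    rw [div_le_iff₀ hc] at hu
    rw [le_div_iff₀ hc] at hv
    constructor <;> linarith
  have hinv : ∀ s, (c * s + e - e) / c = s := fun s => by field_simp; ring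
  have haff : ContDiff ℝ 1 fun s : ℝ => c * s + e := by fun_prop
  refine ⟨?_, n, fun i => (t i - e) / c,
    fun i j hij => (div_lt_div_iff_of_pos_right hc).2 (sub_lt_sub_right (ht hij) e),
    by simp only [← ha, hinv], by simp only [← hb, hinv],
    fun i => (hp i).comp haff.contDiffOn (hmaps _ _)⟩
  simpa only [← ha, ← hb, hinv, Function.comp_def] using
    hcont.comp haff.continuous.continuousOn (hmaps _ _)

theorem comp_const_sub (h : PiecewiseC1On γ a b) (e : ℝ) :
    PiecewiseC1On (fun s => γ (e - s)) (e - b) (e - a) := by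
  obtain ⟨hcont, n, t, ht, rfl, rfl, hp⟩ := h
  have hmaps : ∀ u v, MapsTo (fun s => e - s) (Icc (e - v) (e - u)) (Icc u v) :=
    fun u v s hs => ⟨by linarith [hs.2], by linarith [hs.1]⟩
  have hrefl : ContDiff ℝ 1 fun s : ℝ => e - s := by fun_prop
  refine ⟨?_, n, fun i => e - t i.rev, fun i j hij => by simpa using ht (Fin.rev_lt_rev.2 hij),
    by simp, by simp, fun i => ?_⟩
  · simpa only [Function.comp_def] using hcont.comp hrefl.continuous.continuousOn (hmaps _ _)
  · simpa only [Fin.rev_castSucc, Fin.rev_succ, Function.comp_def] using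
      (hp i.rev).comp hrefl.contDiffOn (hmaps _ _)

theorem append {m : ℝ} (h₁ : PiecewiseC1On γ a m) (h₂ : PiecewiseC1On γ m b) :
    PiecewiseC1On γ a b := by
  have hcont : ContinuousOn γ (Icc a b) := by
    rw [← Icc_union_Icc_eq_Icc h₁.le h₂.le]
    exact h₁.1.union_of_isClosed h₂.1 isClosed_Icc isClosed_Icc
  obtain ⟨-, n₁, t₁, ht₁, rfl, rfl, hp₁⟩ := h₁
  obtain ⟨-, n₂, t₂, ht₂, h₀, rfl, hp₂⟩ := h₂
  obtain ⟨t, ht0, htlast, hpieces⟩ := Fin.exists_chain_append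
    (P := fun u v => u < v ∧ ContDiffOn ℝ 1 γ (Icc u v)) h₀.symm
    (fun i => ⟨Fin.strictMono_iff_lt_succ.1 ht₁ i, hp₁ i⟩)
    (fun i => ⟨Fin.strictMono_iff_lt_succ.1 ht₂ i, hp₂ i⟩)
  exact ⟨hcont, _, t, Fin.strictMono_iff_lt_succ.2 fun i => (hpieces i).1, ht0, htlast,
    fun i => (hpieces i).2⟩

theorem exists_finite_hasDerivAt_norm_le (h : PiecewiseC1On γ a b) :
    ∃ T : Set ℝ, T.Finite ∧ ∃ M,
      ∀ s ∈ Ioo a b \ T, HasDerivAt γ (deriv γ s) s ∧ ‖deriv γ s‖ ≤ M := by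
  obtain ⟨-, n, t, ht, rfl, rfl, hp⟩ := h
  have hbound : ∀ i : Fin n, ∃ M, ∀ s ∈ Icc (t i.castSucc) (t i.succ),
      ‖derivWithin γ (Icc (t i.castSucc) (t i.succ)) s‖ ≤ M := fun i =>
    isCompact_Icc.exists_bound_of_continuousOn
      ((hp i).continuousOn_derivWithin (uniqueDiffOn_Icc (ht Fin.castSucc_lt_succ)) le_rfl)
  choose M hM using hbound
  obtain ⟨M', hM'⟩ := (finite_range M).bddAbove
  refine ⟨range t, finite_range t, M', fun s ⟨hs, hsT⟩ => ?_⟩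
  obtain ⟨i, hi⟩ := Fin.exists_mem_Ioo_of_notMem_range hs.1 hs.2 hsT
  have hnhds : Icc (t i.castSucc) (t i.succ) ∈ 𝓝 s := Icc_mem_nhds hi.1 hi.2
  have hdiff : DifferentiableAt ℝ γ s :=
    ((hp i).differentiableOn one_ne_zero s (Ioo_subset_Icc_self hi)).differentiableAt hnhds
  refine ⟨hdiff.hasDerivAt, ?_⟩
  rw [← derivWithin_of_mem_nhds hnhds]
  exact (hM i s (Ioo_subset_Icc_self hi)).trans (hM' (mem_range_self i))

variable [CompleteSpace E]

theorem intervalIntegrable_deriv (h : PiecewiseC1On γ a b) :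
    IntervalIntegrable (deriv γ) volume a b := by
  obtain ⟨T, hT, M, hM⟩ := h.exists_finite_hasDerivAt_norm_le
  rw [intervalIntegrable_iff_integrableOn_Ioo_of_le h.le]
  refine Measure.integrableOn_of_bounded (M := M) measure_Ioo_lt_top.ne
    (stronglyMeasurable_deriv γ).aestronglyMeasurable ?_
  rw [ae_restrict_iff' measurableSet_Ioo]
  filter_upwards [measure_eq_zero_iff_ae_notMem.1 (hT.measure_zero volume)] with s hsT hs
  exact (hM s ⟨hs, hsT⟩).2

theorem norm_sub_le_integral_norm_deriv (h : PiecewiseC1On γ a b) {u v : ℝ}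
    (hu : a ≤ u) (huv : u ≤ v) (hv : v ≤ b) : ‖γ v - γ u‖ ≤ ∫ s in u..v, ‖deriv γ s‖ := by
  obtain ⟨T, hT, M, hM⟩ := h.exists_finite_hasDerivAt_norm_le
  have hint : IntervalIntegrable (deriv γ) volume u v := h.intervalIntegrable_deriv.mono_set <| by
    rw [uIcc_of_le huv, uIcc_of_le h.le]
    exact Icc_subset_Icc hu hv
  rw [← integral_eq_of_hasDerivAt_off_countable_of_le γ (deriv γ) huv hT.countable
    (h.1.mono (Icc_subset_Icc hu hv))
    (fun s hs => (hM s ⟨Ioo_subset_Ioo hu hv hs.1, hs.2⟩).1) hint]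
  exact intervalIntegral.norm_integral_le_integral_norm huv

end PiecewiseC1On

noncomputable def rhoLength (ρ : E → ℝ) (γ : ℝ → E) (a b : ℝ) : ℝ :=
  ∫ s in a..b, ‖deriv γ s‖ / ρ (γ s)

variable {ρ : E → ℝ}

theorem rhoLength_nonneg (hρ : ∀ x, 0 ≤ ρ x) (hab : a ≤ b) : 0 ≤ rhoLength ρ γ a b :=
  intervalIntegral.integral_nonneg hab fun _ _ => div_nonneg (norm_nonneg _) (hρ _)

theorem rhoLength_congr (hab : a ≤ b) (h : EqOn γ γ' (Ioo a b)) :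
    rhoLength ρ γ a b = rhoLength ρ γ' a b := by
  simp only [rhoLength, intervalIntegral.integral_of_le hab, integral_Ioc_eq_integral_Ioo]
  refine setIntegral_congr_fun measurableSet_Ioo fun s hs => ?_
  rw [(h.eventuallyEq_of_mem (Ioo_mem_nhds hs.1 hs.2)).deriv_eq, h hs]

theorem rhoLength_comp_mul_add {c : ℝ} (hc : 0 < c) (e : ℝ) :
    rhoLength ρ (fun s => γ (c * s + e)) a b = rhoLength ρ γ (c * a + e) (c * b + e) := by
  have hd : ∀ s, ‖deriv (fun s => γ (c * s + e)) s‖ = c * ‖deriv γ (c * s + e)‖ := fun s => by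
    rw [deriv_comp_mul_left c (fun u => γ (u + e)) s, deriv_comp_add_const, norm_smul,
      Real.norm_of_nonneg hc.le]
  simp only [rhoLength, hd, mul_div_assoc]
  rw [intervalIntegral.integral_const_mul,
    intervalIntegral.integral_comp_mul_add (fun u => ‖deriv γ u‖ / ρ (γ u)) hc.ne',
    smul_eq_mul, mul_inv_cancel_left₀ hc.ne']

theorem rhoLength_comp_const_sub (e : ℝ) :
    rhoLength ρ (fun s => γ (e - s)) a b = rhoLength ρ γ (e - b) (e - a) := by
  simp only [rhoLength, deriv_comp_const_sub, norm_neg]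
  exact intervalIntegral.integral_comp_sub_left (fun u => ‖deriv γ u‖ / ρ (γ u)) e

noncomputable def curveTrans (γ₁ γ₂ : ℝ → E) (s : ℝ) : E :=
  if s ≤ 1 / 2 then γ₁ (2 * s) else γ₂ (2 * s - 1)

theorem PiecewiseC1On.trans {γ₁ γ₂ : ℝ → E} (h₁ : PiecewiseC1On γ₁ 0 1)
    (h₂ : PiecewiseC1On γ₂ 0 1) (h : γ₁ 1 = γ₂ 0) :
    PiecewiseC1On (curveTrans γ₁ γ₂) 0 1 := by
  have hleft : PiecewiseC1On (curveTrans γ₁ γ₂) 0 (1 / 2) :=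
    (h₁.comp_mul_add two_pos (e := 0) (by norm_num) (by norm_num)).congr fun s hs => by
      simp only [curveTrans, if_pos hs.2, add_zero]
  have hright : PiecewiseC1On (curveTrans γ₁ γ₂) (1 / 2) 1 :=
    (h₂.comp_mul_add two_pos (e := -1) (by norm_num) (by norm_num)).congr fun s hs => by
      rcases hs.1.eq_or_lt with rfl | hlt
      · rw [curveTrans, if_pos le_rfl]
        norm_num [h]
      · rw [curveTrans, if_neg (not_le.2 hlt), sub_eq_add_neg]
  exact hleft.append hright

theorem rhoLength_curveTrans {γ₁ γ₂ : ℝ → E} (hint : IntervalIntegrable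
      (fun s => ‖deriv (curveTrans γ₁ γ₂) s‖ / ρ (curveTrans γ₁ γ₂ s)) volume 0 1) :
    rhoLength ρ (curveTrans γ₁ γ₂) 0 1 = rhoLength ρ γ₁ 0 1 + rhoLength ρ γ₂ 0 1 := by
  have hleft : rhoLength ρ (curveTrans γ₁ γ₂) 0 (1 / 2) = rhoLength ρ γ₁ 0 1 := by
    rw [rhoLength_congr (γ' := fun s => γ₁ (2 * s + 0)) (by norm_num) fun s hs => by
      simp only [curveTrans, if_pos hs.2.le, add_zero], rhoLength_comp_mul_add two_pos]
    norm_num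
  have hright : rhoLength ρ (curveTrans γ₁ γ₂) (1 / 2) 1 = rhoLength ρ γ₂ 0 1 := by
    rw [rhoLength_congr (γ' := fun s => γ₂ (2 * s + -1)) (by norm_num) fun s hs => by
      rw [curveTrans, if_neg (not_le.2 hs.1), sub_eq_add_neg], rhoLength_comp_mul_add two_pos]
    norm_num
  have hsub : ∀ {u v : ℝ}, 0 ≤ u → u ≤ v → v ≤ 1 → uIcc u v ⊆ uIcc 0 1 := fun hu huv hv =>
    uIcc_subset_uIcc (mem_uIcc_of_le hu (huv.trans hv)) (mem_uIcc_of_le (hu.trans huv) hv)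
  rw [← hleft, ← hright, rhoLength, rhoLength, rhoLength,
    intervalIntegral.integral_add_adjacent_intervals
      (hint.mono_set (hsub le_rfl (by norm_num) (by norm_num)))
      (hint.mono_set (hsub (by norm_num) (by norm_num) le_rfl))]

end Curves

structure IsRadiusFunction_s14 {X : Type*} [PseudoMetricSpace X] (ρ : X → ℝ) (C : ℝ) : Prop where
  pos : ∀ x, 0 < ρ x
  inv_mul_le : ∀ x y, dist y x < ρ x → C⁻¹ * ρ x ≤ ρ y
  le_mul : ∀ x y, dist y x < ρ x → ρ y ≤ C * ρ x

namespace IsRadiusFunction_s14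

variable {X : Type*} [PseudoMetricSpace X] {ρ : X → ℝ} {C : ℝ}

theorem one_le [Nonempty X] (hρ : IsRadiusFunction_s14 ρ C) : 1 ≤ C := by
  obtain ⟨x⟩ := ‹Nonempty X›
  exact (le_mul_iff_one_le_left (hρ.pos x)).1 (hρ.le_mul x x (by simpa using hρ.pos x))

theorem exists_pos_le_of_isCompact (hρ : IsRadiusFunction_s14 ρ C) {K : Set X}
    (hK : IsCompact K) : ∃ ε > 0, ∀ z ∈ K, ε ≤ ρ z := by
  refine hK.induction_on ⟨1, one_pos, by simp⟩
    (fun s t hst ⟨ε, hε, h⟩ => ⟨ε, hε, fun z hz => h z (hst hz)⟩)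
    (fun s t ⟨ε, hε, h⟩ ⟨δ, hδ, h'⟩ => ⟨min ε δ, lt_min hε hδ, fun z hz =>
      hz.elim (fun hz => (min_le_left _ _).trans (h z hz))
        (fun hz => (min_le_right _ _).trans (h' z hz))⟩)
    fun x _ => ?_
  have : Nonempty X := ⟨x⟩
  have hC : 0 < C := one_pos.trans_le hρ.one_le
  exact ⟨Metric.ball x (ρ x), mem_nhdsWithin_of_mem_nhds (Metric.ball_mem_nhds x (hρ.pos x)),
    C⁻¹ * ρ x, by have := hρ.pos x; positivity, fun z hz => hρ.inv_mul_le x z hz⟩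

end IsRadiusFunction_s14

section RadiusFunction

variable {E : Type*} [NormedAddCommGroup E] [NormedSpace ℝ E] [CompleteSpace E]
  [MeasurableSpace E] [BorelSpace E] {γ : ℝ → E} {a b : ℝ} {ρ : E → ℝ} {C : ℝ}

theorem PiecewiseC1On.intervalIntegrable_rho (h : PiecewiseC1On γ a b)
    (hρ : IsRadiusFunction_s14 ρ C) (hmeas : Measurable ρ) :
    IntervalIntegrable (fun s => ‖deriv γ s‖ / ρ (γ s)) volume a b := by
  obtain ⟨ε, hε, hρε⟩ :=
    hρ.exists_pos_le_of_isCompact (isCompact_Icc.image_of_continuousOn h.1)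
  have hderiv :=
    (intervalIntegrable_iff_integrableOn_Icc_of_le h.le).1 h.intervalIntegrable_deriv
  rw [intervalIntegrable_iff_integrableOn_Icc_of_le h.le]
  have hbound : ∀ᵐ s ∂volume.restrict (Icc a b), ‖(ρ (γ s))⁻¹‖ ≤ ε⁻¹ := by
    rw [ae_restrict_iff' measurableSet_Icc]
    refine ae_of_all _ fun s hs => ?_
    rw [norm_inv, Real.norm_of_nonneg (hρ.pos _).le]
    exact inv_anti₀ hε (hρε _ (mem_image_of_mem γ hs))
  simpa only [IntegrableOn, div_eq_inv_mul, Function.comp_def, Pi.inv_apply] using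
    hderiv.norm.bdd_mul
      (hmeas.comp_aemeasurable (h.1.aemeasurable measurableSet_Icc)).inv.aestronglyMeasurable
      hbound

theorem IsRadiusFunction_s14.inv_mul_min_le_rhoLength (hρ : IsRadiusFunction_s14 ρ C)
    (hmeas : Measurable ρ) (h : PiecewiseC1On γ a b) :
    C⁻¹ * min (‖γ b - γ a‖ / ρ (γ a)) 1 ≤ rhoLength ρ γ a b := by
  set x := γ a
  have hx := hρ.pos x
  have hC : 0 < C := one_pos.trans_le hρ.one_le
  obtain ⟨u, hu, hball, hexit⟩ :=
    exists_exit_time (f := fun s => dist (γ s) x) (c := ρ x) h.le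
      (continuous_dist.comp_continuousOn (h.1.prodMk continuousOn_const))
  have hint : ∀ {v w}, a ≤ v → v ≤ w → w ≤ b →
      IntervalIntegrable (fun s => ‖deriv γ s‖ / ρ (γ s)) volume v w := fun hv hvw hw =>
    (h.intervalIntegrable_rho hρ hmeas).mono_set <| by
      rw [uIcc_of_le hvw, uIcc_of_le h.le]
      exact Icc_subset_Icc hv hw
  have hreach : min ‖γ b - x‖ (ρ x) ≤ ‖γ u - x‖ := by
    rcases hexit with rfl | hexit
    · exact min_le_left _ _
    · exact (min_le_right _ _).trans (by rwa [← dist_eq_norm])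
  have hchord : ‖γ u - x‖ ≤ ∫ s in a..u, ‖deriv γ s‖ :=
    h.norm_sub_le_integral_norm_deriv le_rfl hu.1 hu.2
  have hweight : ∫ s in a..u, ‖deriv γ s‖ ≤ C * ρ x * rhoLength ρ γ a u := by
    rw [rhoLength, ← intervalIntegral.integral_const_mul]
    refine intervalIntegral.integral_mono_on_of_le_Ioo hu.1
      (h.intervalIntegrable_deriv.norm.mono_set ?_) ((hint le_rfl hu.1 hu.2).const_mul _)
      fun s hs => ?_
    · rw [uIcc_of_le hu.1, uIcc_of_le h.le]
      exact Icc_subset_Icc le_rfl hu.2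
    have hρs := hρ.pos (γ s)
    calc ‖deriv γ s‖ = ρ (γ s) * (‖deriv γ s‖ / ρ (γ s)) := by field_simp
      _ ≤ C * ρ x * (‖deriv γ s‖ / ρ (γ s)) := by
        gcongr
        exact hρ.le_mul x (γ s) (hball s ⟨hs.1.le, hs.2⟩)
  have hmono : rhoLength ρ γ a u ≤ rhoLength ρ γ a b := by
    rw [rhoLength, rhoLength, ← intervalIntegral.integral_add_adjacent_intervals
      (hint le_rfl hu.1 hu.2) (hint hu.1 hu.2 le_rfl)]
    exact le_add_of_nonneg_right (rhoLength_nonneg (fun y => (hρ.pos y).le) hu.2)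
  calc C⁻¹ * min (‖γ b - x‖ / ρ x) 1 = min ‖γ b - x‖ (ρ x) / (C * ρ x) := by
        rw [← div_self hx.ne', min_div_div_right hx.le]
        field_simp
    _ ≤ rhoLength ρ γ a u := by
        rw [div_le_iff₀ (by positivity)]
        linarith
    _ ≤ rhoLength ρ γ a b := hmono

end RadiusFunction

section DRho

variable {d : ℕ} {ρ : EuclideanSpace ℝ (Fin d) → ℝ} {C : ℝ}
  {x y z : EuclideanSpace ℝ (Fin d)}

theorem dRho_le_rhoLength (hρ : ∀ x, 0 ≤ ρ x) {γ : ℝ → EuclideanSpace ℝ (Fin d)}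
    (hγ : PiecewiseC1On γ 0 1) (hx : γ 0 = x) (hy : γ 1 = y) :
    dRho ρ x y ≤ rhoLength ρ γ 0 1 :=
  csInf_le ⟨0, by rintro _ ⟨_, -, -, -, rfl⟩; exact rhoLength_nonneg hρ zero_le_one⟩
    ⟨γ, piecewiseC1_iff.2 hγ, hx, hy, rfl⟩

theorem le_dRho {c : ℝ} (h : ∀ γ : ℝ → EuclideanSpace ℝ (Fin d),
    PiecewiseC1On γ 0 1 → γ 0 = x → γ 1 = y → c ≤ rhoLength ρ γ 0 1) : c ≤ dRho ρ x y := by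
  have hseg : ContDiff ℝ 1 fun s : ℝ => x + s • (y - x) := by fun_prop
  refine le_csInf ⟨_, _, hseg.piecewiseC1On zero_lt_one, by simp, by simp, rfl⟩ ?_
  rintro _ ⟨γ, hγ, hx, hy, rfl⟩
  exact h γ (piecewiseC1_iff.1 hγ) hx hy

theorem dRho_self (hρ : ∀ x, 0 ≤ ρ x) (x : EuclideanSpace ℝ (Fin d)) : dRho ρ x x = 0 := by
  refine le_antisymm ?_ (le_dRho fun γ _ _ _ => rhoLength_nonneg hρ zero_le_one)
  simpa [rhoLength] using dRho_le_rhoLength hρ (contDiff_const.piecewiseC1On zero_lt_one)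
    (rfl : (fun _ => x) 0 = x) rfl

theorem dRho_comm (hρ : ∀ x, 0 ≤ ρ x) (x y : EuclideanSpace ℝ (Fin d)) :
    dRho ρ x y = dRho ρ y x := by
  have key : ∀ x y : EuclideanSpace ℝ (Fin d), dRho ρ y x ≤ dRho ρ x y := fun x y =>
    le_dRho fun γ hγ hx hy => by
      have hrev : PiecewiseC1On (fun s => γ (1 - s)) 0 1 := by
        simpa using hγ.comp_const_sub 1
      calc dRho ρ y x ≤ rhoLength ρ (fun s => γ (1 - s)) 0 1 :=
            dRho_le_rhoLength hρ hrev (by simpa using hy) (by simpa using hx)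
        _ = rhoLength ρ γ 0 1 := by norm_num [rhoLength_comp_const_sub]
  exact le_antisymm (key y x) (key x y)

theorem dRho_triangle (hρ : IsRadiusFunction_s14 ρ C) (hmeas : Measurable ρ) :
    dRho ρ x z ≤ dRho ρ x y + dRho ρ y z := by
  have hsum : ∀ γ₁ γ₂ : ℝ → EuclideanSpace ℝ (Fin d),
      PiecewiseC1On γ₁ 0 1 → γ₁ 0 = x → γ₁ 1 = y →
      PiecewiseC1On γ₂ 0 1 → γ₂ 0 = y → γ₂ 1 = z →
      dRho ρ x z ≤ rhoLength ρ γ₁ 0 1 + rhoLength ρ γ₂ 0 1 := by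
    intro γ₁ γ₂ h₁ hx hy h₂ hy' hz
    have h := h₁.trans h₂ (hy.trans hy'.symm)
    rw [← rhoLength_curveTrans (h.intervalIntegrable_rho hρ hmeas)]
    exact dRho_le_rhoLength (fun x => (hρ.pos x).le) h (by simp [curveTrans, hx])
      (by norm_num [curveTrans, hz])
  have : dRho ρ x z - dRho ρ y z ≤ dRho ρ x y := le_dRho fun γ₁ h₁ hx hy =>
    sub_le_comm.1 <| le_dRho fun γ₂ h₂ hy' hz =>
      sub_le_iff_le_add'.2 (hsum γ₁ γ₂ h₁ hx hy h₂ hy' hz)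
  linarith

theorem inv_mul_min_le_dRho (hρ : IsRadiusFunction_s14 ρ C) (hmeas : Measurable ρ) :
    C⁻¹ * min (‖y - x‖ / ρ x) 1 ≤ dRho ρ x y :=
  le_dRho fun _ hγ hx hy => hx ▸ hy ▸ hρ.inv_mul_min_le_rhoLength hmeas hγ

theorem eq_of_dRho_eq_zero (hρ : IsRadiusFunction_s14 ρ C) (hmeas : Measurable ρ)
    (h : dRho ρ x y = 0) : x = y := by
  have hC : 0 < C := one_pos.trans_le hρ.one_le
  have hmin : min (‖y - x‖ / ρ x) 1 ≤ 0 :=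
    nonpos_of_mul_nonpos_right (h ▸ inv_mul_min_le_dRho hρ hmeas) (inv_pos.2 hC)
  have hdiv : ‖y - x‖ / ρ x ≤ 0 := (min_le_iff.1 hmin).resolve_right (by norm_num)
  rw [div_le_iff₀ (hρ.pos x), zero_mul, norm_le_zero_iff, sub_eq_zero] at hdiv
  exact hdiv.symm

theorem dist_lt_of_dRho_lt (hρ : IsRadiusFunction_s14 ρ C) (hmeas : Measurable ρ) {r : ℝ}
    (hr : r ≤ 1) (h : dRho ρ x y < C⁻¹ * r) : dist y x < r * ρ x := by
  have hC : 0 < C := one_pos.trans_le hρ.one_le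
  have hmin : min (‖y - x‖ / ρ x) 1 < r :=
    lt_of_mul_lt_mul_left ((inv_mul_min_le_dRho hρ hmeas).trans_lt h) (inv_nonneg.2 hC.le)
  rw [dist_eq_norm, ← div_lt_iff₀ (hρ.pos x)]
  exact (min_lt_iff.1 hmin).resolve_right hr.not_gt

theorem dRho_lt_of_mem_ball (hρ : IsRadiusFunction_s14 ρ C) {r : ℝ} (hr : r ≤ 1)
    (hy : y ∈ Metric.ball x (r * ρ x)) : dRho ρ x y < C * r := by
  have hx := hρ.pos x
  have hC : 0 < C := one_pos.trans_le hρ.one_le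
  rw [Metric.mem_ball, dist_eq_norm] at hy
  have hseg : ∀ s ∈ Icc (0 : ℝ) 1, C⁻¹ * ρ x ≤ ρ (x + s • (y - x)) := fun s hs =>
    hρ.inv_mul_le x _ <| by
      rw [dist_eq_norm, add_sub_cancel_left, norm_smul, Real.norm_of_nonneg hs.1]
      calc s * ‖y - x‖ ≤ ‖y - x‖ := mul_le_of_le_one_left (norm_nonneg _) hs.2
        _ < r * ρ x := hy
        _ ≤ ρ x := mul_le_of_le_one_left hx.le hr
  have hbound : ∀ s ∈ Ι (0 : ℝ) 1,
      ‖‖deriv (fun s : ℝ => x + s • (y - x)) s‖ / ρ (x + s • (y - x))‖ ≤ C * ‖y - x‖ / ρ x := by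
    intro s hs
    have hρs := hρ.pos (x + s • (y - x))
    have hderiv : deriv (fun s : ℝ => x + s • (y - x)) s = y - x := by
      simpa using (((hasDerivAt_id s).smul_const (y - x)).const_add x).deriv
    rw [hderiv, Real.norm_of_nonneg (by positivity)]
    calc ‖y - x‖ / ρ (x + s • (y - x)) ≤ ‖y - x‖ / (C⁻¹ * ρ x) := by
          gcongr
          exact hseg s (Ioc_subset_Icc_self (by simpa using hs))
      _ = C * ‖y - x‖ / ρ x := by field_simp
  have hlen : rhoLength ρ (fun s => x + s • (y - x)) 0 1 ≤ C * ‖y - x‖ / ρ x := by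
    have := intervalIntegral.norm_integral_le_of_norm_le_const hbound
    rw [sub_zero, abs_one, mul_one, Real.norm_eq_abs] at this
    exact (le_abs_self _).trans this
  have hsegC1 : ContDiff ℝ 1 fun s : ℝ => x + s • (y - x) := by fun_prop
  calc dRho ρ x y ≤ rhoLength ρ (fun s => x + s • (y - x)) 0 1 :=
        dRho_le_rhoLength (fun x => (hρ.pos x).le) (hsegC1.piecewiseC1On zero_lt_one)
          (by simp) (by simp)
    _ ≤ C * ‖y - x‖ / ρ x := hlen
    _ < C * r := by
        rw [div_lt_iff₀ hx, mul_assoc]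
        gcongr

end DRho

/-- If `ρ` is a Borel radius function with constant `C`, then `d_ρ` is a metric and for
`r ≤ 1`: `B_ρ(x, C⁻¹r) ⊆ B(x, rρ(x)) ⊆ B_ρ(x, Cr)`. -/
theorem stmt_14 {d : ℕ} (ρ : EuclideanSpace ℝ (Fin d) → ℝ) (C : ℝ)
    (hmeas : Measurable ρ) (hpos : ∀ x, 0 < ρ x)
    (hrad : ∀ x y, dist y x < ρ x → C⁻¹ * ρ x ≤ ρ y ∧ ρ y ≤ C * ρ x) :
    (∀ x y, dRho ρ x y = 0 ↔ x = y) ∧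
    (∀ x y, dRho ρ x y = dRho ρ y x) ∧
    (∀ x y z, dRho ρ x z ≤ dRho ρ x y + dRho ρ y z) ∧
    (∀ (x : EuclideanSpace ℝ (Fin d)) (r : ℝ), r ≤ 1 →
      {y | dRho ρ x y < C⁻¹ * r} ⊆ Metric.ball x (r * ρ x) ∧
      Metric.ball x (r * ρ x) ⊆ {y | dRho ρ x y < C * r}) := by
  have hρ : IsRadiusFunction_s14 ρ C :=
    ⟨hpos, fun x y h => (hrad x y h).1, fun x y h => (hrad x y h).2⟩
  have hnonneg : ∀ x, 0 ≤ ρ x := fun x => (hpos x).le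
  exact ⟨fun x y => ⟨eq_of_dRho_eq_zero hρ hmeas, fun h => h ▸ dRho_self hnonneg x⟩,
    dRho_comm hnonneg, fun x y z => dRho_triangle hρ hmeas, fun x r hr =>
      ⟨fun y hy => dist_lt_of_dRho_lt hρ hmeas hr hy, fun y hy => dRho_lt_of_mem_ball hρ hr hy⟩⟩
end

section
/- If ρ₁ and ρ₂ are radius functions on ℝ^d, then their pointwise maximum ρ₁ ∨ ρ₂ is also a radius function. -/
/-- A radius function on `ℝ^d`: a Borel function `ρ : ℝ^d → (0,∞)` that is approximately
constant (up to a factor `C`) on the ball `B(x, ρ(x))` for every `x`. -/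
def IsRadiusFunction {d : ℕ} (ρ : EuclideanSpace ℝ (Fin d) → ℝ) : Prop :=
  Measurable ρ ∧ (∀ x, 0 < ρ x) ∧
    ∃ C : ℝ, ∀ x y, dist y x < ρ x → C⁻¹ * ρ x ≤ ρ y ∧ ρ y ≤ C * ρ x

/-- The pointwise maximum of two radius functions is a radius function. -/
theorem stmt_15 {d : ℕ} (ρ₁ ρ₂ : EuclideanSpace ℝ (Fin d) → ℝ)
    (h₁ : IsRadiusFunction ρ₁) (h₂ : IsRadiusFunction ρ₂) :
    IsRadiusFunction (fun x => max (ρ₁ x) (ρ₂ x)) := by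
  obtain ⟨m₁, p₁, C₁, hC₁⟩ := h₁
  obtain ⟨m₂, p₂, C₂, hC₂⟩ := h₂
  have hC₁1 : 1 ≤ C₁ := by
    have h := (hC₁ 0 0 (by simpa using p₁ 0)).2
    nlinarith [p₁ 0]
  have hC₂1 : 1 ≤ C₂ := by
    have h := (hC₂ 0 0 (by simpa using p₂ 0)).2
    nlinarith [p₂ 0]
  refine ⟨m₁.max m₂, fun x => lt_max_of_lt_left (p₁ x), max C₁ C₂, ?_⟩
  intro x y hxy
  simp only at hxy ⊢
  set C := max C₁ C₂ with hC
  have hC1 : (1:ℝ) ≤ C := le_max_of_le_left hC₁1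
  have hCpos : (0:ℝ) < C := lt_of_lt_of_le one_pos hC1
  constructor
  · -- lower bound
    rcases le_total (ρ₁ x) (ρ₂ x) with h | h
    · rw [max_eq_right h] at hxy ⊢
      have h2 := (hC₂ x y hxy).1
      have : C⁻¹ * ρ₂ x ≤ C₂⁻¹ * ρ₂ x := by
        have : C⁻¹ ≤ C₂⁻¹ := by
          apply inv_anti₀ (by linarith) (le_max_right _ _)
        exact mul_le_mul_of_nonneg_right this (p₂ x).le
      exact le_trans (le_trans this h2) (le_max_right _ _)
    · rw [max_eq_left h] at hxy ⊢
      have h2 := (hC₁ x y hxy).1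
      have : C⁻¹ * ρ₁ x ≤ C₁⁻¹ * ρ₁ x := by
        have : C⁻¹ ≤ C₁⁻¹ := by
          apply inv_anti₀ (by linarith) (le_max_left _ _)
        exact mul_le_mul_of_nonneg_right this (p₁ x).le
      exact le_trans (le_trans this h2) (le_max_left _ _)
  · -- upper bound
    have hmx : 0 < max (ρ₁ x) (ρ₂ x) := lt_max_of_lt_left (p₁ x)
    apply max_le
    · rcases lt_or_ge (dist x y) (ρ₁ y) with h | h
      · have h2 := (hC₁ y x h).1
        have hρ : ρ₁ y ≤ C₁ * ρ₁ x := by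
          have hC₁pos : (0:ℝ) < C₁ := lt_of_lt_of_le one_pos hC₁1
          rw [inv_mul_le_iff₀ hC₁pos] at h2
          exact h2
        calc ρ₁ y ≤ C₁ * ρ₁ x := hρ
          _ ≤ C * max (ρ₁ x) (ρ₂ x) :=
            mul_le_mul (le_max_left _ _) (le_max_left _ _) (p₁ x).le hCpos.le
      · calc ρ₁ y ≤ dist x y := h
          _ = dist y x := dist_comm _ _
          _ ≤ max (ρ₁ x) (ρ₂ x) := hxy.le
          _ ≤ C * max (ρ₁ x) (ρ₂ x) := le_mul_of_one_le_left hmx.le hC1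
    · rcases lt_or_ge (dist x y) (ρ₂ y) with h | h
      · have h2 := (hC₂ y x h).1
        have hρ : ρ₂ y ≤ C₂ * ρ₂ x := by
          have hC₂pos : (0:ℝ) < C₂ := lt_of_lt_of_le one_pos hC₂1
          rw [inv_mul_le_iff₀ hC₂pos] at h2
          exact h2
        calc ρ₂ y ≤ C₂ * ρ₂ x := hρ
          _ ≤ C * max (ρ₁ x) (ρ₂ x) :=
            mul_le_mul (le_max_right _ _) (le_max_right _ _) (p₂ x).le hCpos.le
      · calc ρ₂ y ≤ dist x y := h
          _ = dist y x := dist_comm _ _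
          _ ≤ max (ρ₁ x) (ρ₂ x) := hxy.le
          _ ≤ C * max (ρ₁ x) (ρ₂ x) := le_mul_of_one_le_left hmx.le hC1
end

section
/- Let V : ℝ^d → [0,∞) be locally bounded, not a.e. zero, and satisfy the L∞-doubling condition ‖V‖_{L∞(B(x,2r))} ≤ D‖V‖_{L∞(B(x,r))} for all x, r. Define ρ_V(x) := sup{r > 0 : r²‖V‖_{L∞(B(x,r))} ≤ 1}. Then ρ_V(x) ∈ (0,∞) for every x, and (4D)⁻¹ ρ_V(x)^{−2} ≤ ‖V‖_{L∞(B(x,ρ_V(x)))} ≤ ρ_V(x)^{−2}. -/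
open MeasureTheory
open scoped ENNReal

/-- The essential supremum `‖V‖_{L∞(B(x,r))}` of a non-negative function on a ball,
valued in `ℝ≥0∞`. -/
noncomputable def LinfBall {d : ℕ} (V : EuclideanSpace ℝ (Fin d) → ℝ)
    (x : EuclideanSpace ℝ (Fin d)) (r : ℝ) : ℝ≥0∞ :=
  essSup (fun y => ENNReal.ofReal (V y)) (volume.restrict (Metric.ball x r))

/-- The radius function associated to a potential `V`:
`ρ_V(x) = sup {r > 0 : r² ‖V‖_{L∞(B(x,r))} ≤ 1}`. -/
noncomputable def rhoV {d : ℕ} (V : EuclideanSpace ℝ (Fin d) → ℝ)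
    (x : EuclideanSpace ℝ (Fin d)) : ℝ :=
  sSup {r : ℝ | 0 < r ∧ ENNReal.ofReal (r ^ 2) * LinfBall V x r ≤ 1}

/-!
The admissible radii `r > 0` with `r² ‖V‖_{L∞(B(x,r))} ≤ 1` form an initial segment of
`(0, ∞)`: nonempty because `V` is locally bounded, bounded because `‖V‖_{L∞(B(x,R))} > 0` for
some `R` when `V` is not a.e. zero. Hence `ρ = ρ_V(x) ∈ (0, ∞)`. The essential supremum over
`B(x,ρ)` is the supremum over the smaller concentric balls, so `ρ` is itself admissible, which is
the upper bound. The radius `2ρ` is not admissible, and doubling turns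
`1 < (2ρ)² ‖V‖_{L∞(B(x,2ρ))} ≤ 4Dρ² ‖V‖_{L∞(B(x,ρ))}` into the lower bound.
-/

open Filter Topology

theorem essSup_restrict_iUnion_le {α β ι : Type*} [MeasurableSpace α] [CompleteLinearOrder β]
    [TopologicalSpace β] [FirstCountableTopology β] [OrderTopology β] [Countable ι]
    {μ : Measure α} (f : α → β) (s : ι → Set α) :
    essSup f (μ.restrict (⋃ i, s i)) ≤ ⨆ i, essSup f (μ.restrict (s i)) :=
  essSup_le_of_ae_le _ <| (ae_restrict_iUnion_iff _ _).2 fun i =>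
    (ae_le_essSup (f := f)).mono fun _ h => h.trans (le_iSup_of_le i le_rfl)

section LinfBall

variable {d : ℕ} {V : EuclideanSpace ℝ (Fin d) → ℝ} {x : EuclideanSpace ℝ (Fin d)}

lemma LinfBall_mono : Monotone (LinfBall V x) := fun _ _ h =>
  essSup_mono_measure' (Measure.restrict_mono (Metric.ball_subset_ball h) le_rfl)

lemma LinfBall_le_ofReal {r M : ℝ} (h : ∀ y ∈ Metric.ball x r, V y ≤ M) :
    LinfBall V x r ≤ ENNReal.ofReal M :=
  essSup_le_of_ae_le _ <| (ae_restrict_iff' measurableSet_ball).2 <|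
    Eventually.of_forall fun y hy => ENNReal.ofReal_le_ofReal (h y hy)

lemma LinfBall_le_iSup_lt (ρ : ℝ) : LinfBall V x ρ ≤ ⨆ s < ρ, LinfBall V x s := by
  have hcover : Metric.ball x ρ ⊆ ⋃ n : ℕ, Metric.ball x (ρ - 1 / (n + 1)) := fun y hy => by
    obtain ⟨n, hn⟩ := exists_nat_one_div_lt (sub_pos.2 (Metric.mem_ball.1 hy))
    exact Set.mem_iUnion.2 ⟨n, Metric.mem_ball.2 (by linarith)⟩
  calc LinfBall V x ρ
      ≤ essSup (fun y => ENNReal.ofReal (V y))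
          (volume.restrict (⋃ n : ℕ, Metric.ball x (ρ - 1 / (n + 1)))) :=
        essSup_mono_measure' (Measure.restrict_mono hcover le_rfl)
    _ ≤ ⨆ n : ℕ, LinfBall V x (ρ - 1 / (n + 1)) := essSup_restrict_iUnion_le _ _
    _ ≤ ⨆ s < ρ, LinfBall V x s :=
        iSup_le fun n => le_iSup₂_of_le (ρ - 1 / (n + 1)) (sub_lt_self _ (by positivity)) le_rfl

lemma exists_LinfBall_pos (hV0 : ∀ y, 0 ≤ V y) (hne : ¬ V =ᵐ[volume] 0)
    (x : EuclideanSpace ℝ (Fin d)) :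
    ∃ R, 0 < LinfBall V x R := by
  by_contra! h
  apply hne
  have hsup : essSup (fun y => ENNReal.ofReal (V y)) volume = 0 := by
    refine le_antisymm ?_ zero_le
    calc essSup (fun y => ENNReal.ofReal (V y)) volume
        = essSup (fun y => ENNReal.ofReal (V y))
            (volume.restrict (⋃ n : ℕ, Metric.ball x (n + 1))) := by
          rw [Metric.iUnion_ball_nat_succ, Measure.restrict_univ]
      _ ≤ ⨆ n : ℕ, LinfBall V x (n + 1) := essSup_restrict_iUnion_le _ _
      _ ≤ 0 := iSup_le fun n => h _
  filter_upwards [ENNReal.essSup_eq_zero_iff.1 hsup] with y hy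
  exact le_antisymm (ENNReal.ofReal_eq_zero.1 hy) (hV0 y)

-- `rhoV V x` is, by definition, `sSup (admissibleRadii V x)`.
def admissibleRadii (V : EuclideanSpace ℝ (Fin d) → ℝ) (x : EuclideanSpace ℝ (Fin d)) :
    Set ℝ :=
  {r : ℝ | 0 < r ∧ ENNReal.ofReal (r ^ 2) * LinfBall V x r ≤ 1}

lemma mem_admissibleRadii_iff {r : ℝ} (hr : 0 < r) :
    r ∈ admissibleRadii V x ↔ LinfBall V x r ≤ ENNReal.ofReal ((r ^ 2)⁻¹) := by
  rw [ENNReal.ofReal_inv_of_pos (by positivity), ENNReal.le_inv_iff_mul_le, mul_comm]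
  exact and_iff_right hr

lemma mem_admissibleRadii_of_le {r s : ℝ} (hr : r ∈ admissibleRadii V x) (hs : 0 < s)
    (hsr : s ≤ r) : s ∈ admissibleRadii V x := by
  rw [mem_admissibleRadii_iff hs]
  calc LinfBall V x s ≤ LinfBall V x r := LinfBall_mono hsr
    _ ≤ ENNReal.ofReal ((r ^ 2)⁻¹) := (mem_admissibleRadii_iff hr.1).1 hr
    _ ≤ ENNReal.ofReal ((s ^ 2)⁻¹) := by gcongr

lemma mem_admissibleRadii_of_lt_rhoV (hne : (admissibleRadii V x).Nonempty) {s : ℝ}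
    (hs : 0 < s) (hsρ : s < rhoV V x) : s ∈ admissibleRadii V x :=
  let ⟨_, hr, hsr⟩ := exists_lt_of_lt_csSup hne hsρ
  mem_admissibleRadii_of_le hr hs hsr.le

lemma admissibleRadii_nonempty {M : ℝ} (hM : ∀ y ∈ Metric.ball x 1, V y ≤ M) :
    (admissibleRadii V x).Nonempty := by
  set M₁ := max M 1
  have hM₁ : 1 ≤ M₁ := le_max_right _ _
  have hr : M₁⁻¹ ≤ 1 := inv_le_one_of_one_le₀ hM₁
  refine ⟨M₁⁻¹, (mem_admissibleRadii_iff (by positivity)).2 ?_⟩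
  calc LinfBall V x M₁⁻¹ ≤ LinfBall V x 1 := LinfBall_mono hr
    _ ≤ ENNReal.ofReal M₁ := LinfBall_le_ofReal fun y hy => (hM y hy).trans (le_max_left _ _)
    _ ≤ ENNReal.ofReal ((M₁⁻¹ ^ 2)⁻¹) := by
        gcongr
        rw [inv_pow, inv_inv]
        nlinarith

lemma bddAbove_admissibleRadii {R : ℝ} (hR : 0 < LinfBall V x R) :
    BddAbove (admissibleRadii V x) := by
  refine ⟨max R √(LinfBall V x R)⁻¹.toReal, fun r hr => ?_⟩
  rcases le_or_gt r R with hrR | hRr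
  · exact hrR.trans (le_max_left _ _)
  have hsq : ENNReal.ofReal (r ^ 2) ≤ (LinfBall V x R)⁻¹ :=
    ENNReal.le_inv_iff_mul_le.2 <| (mul_le_mul_right (LinfBall_mono hRr.le) _).trans hr.2
  have := ENNReal.toReal_mono (ENNReal.inv_ne_top.2 hR.ne') hsq
  rw [ENNReal.toReal_ofReal (by positivity)] at this
  exact (Real.le_sqrt_of_sq_le this).trans (le_max_right _ _)

lemma LinfBall_rhoV_le (hne : (admissibleRadii V x).Nonempty) (hρ : 0 < rhoV V x) :
    LinfBall V x (rhoV V x) ≤ ENNReal.ofReal ((rhoV V x ^ 2)⁻¹) := by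
  refine (LinfBall_le_iSup_lt _).trans (iSup₂_le fun s hs => ?_)
  have hlim : Tendsto (fun t : ℝ => ENNReal.ofReal ((t ^ 2)⁻¹)) (𝓝[<] rhoV V x)
      (𝓝 (ENNReal.ofReal ((rhoV V x ^ 2)⁻¹))) :=
    (ENNReal.continuous_ofReal.continuousAt.comp
      (ContinuousAt.inv₀ (by fun_prop) (by positivity))).tendsto.mono_left nhdsWithin_le_nhds
  refine ge_of_tendsto hlim ?_
  filter_upwards [Ioo_mem_nhdsLT (max_lt hs hρ)] with t ht
  have ht0 : 0 < t := (le_max_right _ _).trans_lt ht.1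
  calc LinfBall V x s ≤ LinfBall V x t := LinfBall_mono ((le_max_left _ _).trans ht.1.le)
    _ ≤ _ := (mem_admissibleRadii_iff ht0).1 (mem_admissibleRadii_of_lt_rhoV hne ht0 ht.2)

lemma le_LinfBall_rhoV {D : ℝ}
    (hD : LinfBall V x (2 * rhoV V x) ≤ ENNReal.ofReal D * LinfBall V x (rhoV V x))
    (hbdd : BddAbove (admissibleRadii V x)) (hρ : 0 < rhoV V x) :
    ENNReal.ofReal ((4 * D)⁻¹ * (rhoV V x ^ 2)⁻¹) ≤ LinfBall V x (rhoV V x) := by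
  set ρ := rhoV V x
  have hout : 2 * ρ ∉ admissibleRadii V x := fun h => by
    have : 2 * ρ ≤ ρ := le_csSup hbdd h
    linarith
  rw [mem_admissibleRadii_iff (by positivity), not_le] at hout
  have hlt := hout.trans_le hD
  -- if `D ≤ 0`, the right-hand side of `hD` vanishes
  have hD0 : 0 < D := ENNReal.ofReal_pos.1 <| pos_of_ne_zero fun h0 => by simp [h0] at hlt
  have hsplit : ENNReal.ofReal ((4 * D)⁻¹ * (ρ ^ 2)⁻¹) =
      (ENNReal.ofReal D)⁻¹ * ENNReal.ofReal (((2 * ρ) ^ 2)⁻¹) := by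
    rw [← ENNReal.ofReal_inv_of_pos hD0, ← ENNReal.ofReal_mul (by positivity)]
    congr 1
    ring
  rw [hsplit, ENNReal.inv_mul_le_iff (by simpa using hD0) ENNReal.ofReal_ne_top]
  exact hlt.le

end LinfBall

/-- If `V ≥ 0` is locally bounded, not a.e. zero, and `L∞`-doubling with constant `D`,
then `ρ_V(x) ∈ (0,∞)` for every `x` and
`(4D)⁻¹ ρ_V(x)⁻² ≤ ‖V‖_{L∞(B(x,ρ_V(x)))} ≤ ρ_V(x)⁻²`. -/
theorem stmt_16 {d : ℕ} (V : EuclideanSpace ℝ (Fin d) → ℝ) (D : ℝ)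
    (hV0 : ∀ y, 0 ≤ V y)
    (hloc : ∀ x r, ∃ M : ℝ, ∀ y ∈ Metric.ball x r, V y ≤ M)
    (hne : ¬ (V =ᵐ[volume] 0))
    (hD : ∀ x r, 0 < r → LinfBall V x (2 * r) ≤ ENNReal.ofReal D * LinfBall V x r) :
    ∀ x, (0 < rhoV V x ∧
        BddAbove {r : ℝ | 0 < r ∧ ENNReal.ofReal (r ^ 2) * LinfBall V x r ≤ 1}) ∧
      ENNReal.ofReal ((4 * D)⁻¹ * (rhoV V x ^ 2)⁻¹) ≤ LinfBall V x (rhoV V x) ∧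
      LinfBall V x (rhoV V x) ≤ ENNReal.ofReal ((rhoV V x ^ 2)⁻¹) := by
  intro x
  obtain ⟨R, hR⟩ := exists_LinfBall_pos hV0 hne x
  obtain ⟨M, hM⟩ := hloc x 1
  have hnonempty := admissibleRadii_nonempty hM
  have hbdd := bddAbove_admissibleRadii hR
  have hρ : 0 < rhoV V x :=
    let ⟨_, hr⟩ := hnonempty
    hr.1.trans_le (le_csSup hbdd hr)
  exact ⟨⟨hρ, hbdd⟩, le_LinfBall_rhoV (hD x _ hρ) hbdd hρ, LinfBall_rhoV_le hnonempty hρ⟩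
end
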